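/- arXiv:1103.3152 — 8 statements merged into one kernel-verified Lean document; each statement's English description precedes it below -/
import Mathlib

section
/- For a full-rank sublattice $\Lambda \subset \mathbb{Z}^k$ and weights $\boldsymbol{\ell} \in \mathbb{R}_{>0}^k$, the diameter of the directed quotient lattice graph satisfies $\operatorname{diam}(LG_k^+/\Lambda) = \operatorname{diam}^+_{\boldsymbol{\ell}}(\mathbb{R}^k/\Lambda) - (\ell_1 + \cdots + \ell_k)$, where $\operatorname{diam}^+_{\boldsymbol{\ell}}(\mathbb{R}^k/\Lambda) = \sup_{\mathbf{y}\in\mathbb{R}^k} \min\{(\mathbf{y}+\Lambda)\cap\mathbb{R}_{\geq 0}^k\}\cdot\boldsymbol{\ell}$. -/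
section Aux
variable (k : ℕ) (Λ : AddSubgroup (Fin k → ℤ)) (ℓ : Fin k → ℝ)

/-- The discrete feasible value set for `m`. -/
def latS (m : Fin k → ℤ) : Set ℝ :=
  {s : ℝ | ∃ z : Fin k → ℤ, z - m ∈ Λ ∧ (∀ i, 0 ≤ z i) ∧ s = ∑ i, (z i : ℝ) * ℓ i}

variable {k Λ ℓ}

lemma latS_nonempty (hΛ : Λ.index ≠ 0) (m : Fin k → ℤ) : (latS k Λ ℓ m).Nonempty := by
  have h1 : (1 : ℤ) ≤ (Λ.index : ℤ) := by exact_mod_cast Nat.one_le_iff_ne_zero.mpr hΛ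
  refine ⟨_, fun i => m i + (Λ.index : ℤ) * |m i|, ?_, ?_, rfl⟩
  · have : (fun i => m i + (Λ.index : ℤ) * |m i|) - m = Λ.index • (fun i => |m i|) := by
      funext i; simp [nsmul_eq_mul]
    rw [this]
    exact AddSubgroup.nsmul_index_mem Λ _
  · intro i
    simp only []
    have := abs_nonneg (m i); have := neg_abs_le (m i); show 0 ≤ m i + (Λ.index : ℤ) * |m i|; nlinarith

lemma latS_bddBelow (hℓ : ∀ i, 0 < ℓ i) (m : Fin k → ℤ) : BddBelow (latS k Λ ℓ m) := by
  refine ⟨0, fun s hs => ?_⟩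
  obtain ⟨z, -, hz, rfl⟩ := hs
  exact Finset.sum_nonneg fun i _ => mul_nonneg (by exact_mod_cast hz i) (hℓ i).le

lemma latS_coset {m m' : Fin k → ℤ} (h : m - m' ∈ Λ) : latS k Λ ℓ m = latS k Λ ℓ m' := by
  ext s
  constructor <;> rintro ⟨z, hw, hz, rfl⟩
  · exact ⟨z, by simpa using add_mem hw h, hz, rfl⟩
  · refine ⟨z, by simpa using sub_mem hw h, hz, rfl⟩

end Aux

section Aux2
variable {k : ℕ} {Λ : AddSubgroup (Fin k → ℤ)} {ℓ : Fin k → ℝ}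

lemma latT_eq (y : Fin k → ℝ) :
    {s : ℝ | ∃ z : Fin k → ℝ,
        (∃ w ∈ Λ, z = y + fun i => (w i : ℝ)) ∧ (∀ i, 0 ≤ z i) ∧ s = ∑ i, z i * ℓ i}
      = (fun s => (∑ i, Int.fract (y i) * ℓ i) + s) '' latS k Λ ℓ (fun i => ⌊y i⌋) := by
  ext s
  constructor
  · rintro ⟨z, ⟨w, hw, rfl⟩, hz, rfl⟩
    refine ⟨∑ i, ((⌊y i⌋ + w i : ℤ) : ℝ) * ℓ i, ⟨fun i => ⌊y i⌋ + w i, ?_, ?_, rfl⟩, ?_⟩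
    · have : (fun i => ⌊y i⌋ + w i) - (fun i => ⌊y i⌋) = w := by funext i; simp
      rw [this]; exact hw
    · intro i
      have h0 : (0:ℝ) ≤ y i + w i := hz i
      have : (-1 : ℝ) < ((⌊y i⌋ + w i : ℤ) : ℝ) := by
        have hf := Int.fract_lt_one (y i)
        have : y i + w i = Int.fract (y i) + ((⌊y i⌋ + w i : ℤ) : ℝ) := by
          push_cast; rw [Int.fract]; ring
        linarith [this ▸ h0]
      exact_mod_cast (by exact_mod_cast this : (-1:ℤ) < ⌊y i⌋ + w i)
    · show _ + _ = _
      rw [← Finset.sum_add_distrib]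
      refine Finset.sum_congr rfl fun i _ => ?_
      have : (y i + w i) = Int.fract (y i) + ((⌊y i⌋ + w i : ℤ) : ℝ) := by
        push_cast; rw [Int.fract]; ring
      rw [show (y + fun i => (w i : ℝ)) i = y i + w i from rfl, this]; ring
  · rintro ⟨s, ⟨z, hw, hz, rfl⟩, rfl⟩
    refine ⟨y + fun i => ((z i - ⌊y i⌋ : ℤ) : ℝ), ⟨z - fun i => ⌊y i⌋, hw, by funext i; simp⟩,
      ?_, ?_⟩
    · intro i
      have : y i + ((z i - ⌊y i⌋ : ℤ) : ℝ) = Int.fract (y i) + (z i : ℝ) := by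
        push_cast; rw [Int.fract]; ring
      show (0:ℝ) ≤ y i + _
      rw [this]
      have := Int.fract_nonneg (y i)
      have : (0:ℝ) ≤ (z i : ℝ) := by exact_mod_cast hz i
      positivity
    · show _ + _ = _
      rw [← Finset.sum_add_distrib]
      refine (Finset.sum_congr rfl fun i _ => ?_).symm
      show (y i + ((z i - ⌊y i⌋ : ℤ) : ℝ)) * ℓ i = _
      have : y i + ((z i - ⌊y i⌋ : ℤ) : ℝ) = Int.fract (y i) + (z i : ℝ) := by
        push_cast; rw [Int.fract]; ring
      rw [this]; ring

lemma sInf_latT (hΛ : Λ.index ≠ 0) (hℓ : ∀ i, 0 < ℓ i) (y : Fin k → ℝ) :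
    sInf {s : ℝ | ∃ z : Fin k → ℝ,
        (∃ w ∈ Λ, z = y + fun i => (w i : ℝ)) ∧ (∀ i, 0 ≤ z i) ∧ s = ∑ i, z i * ℓ i}
      = (∑ i, Int.fract (y i) * ℓ i) + sInf (latS k Λ ℓ (fun i => ⌊y i⌋)) := by
  rw [latT_eq y]
  exact (Monotone.map_csInf_of_continuousAt (f := fun s => (∑ i, Int.fract (y i) * ℓ i) + s)
    (by fun_prop) (fun a b h => by dsimp; linarith)
    (latS_nonempty hΛ _) (latS_bddBelow hℓ _)).symm

end Aux2

/-- For a finite-index sublattice `Λ ⊆ ℤ^k` and weights `ℓ ∈ ℝ_{>0}^k`, the diameter of the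
directed quotient lattice graph `LG_k⁺/Λ` equals the directed `ℓ`-weighted diameter of the
torus `ℝ^k/Λ` minus `ℓ_1 + ⋯ + ℓ_k`. -/
theorem diam_directed_quotient_lattice_graph
    (k : ℕ) (Λ : AddSubgroup (Fin k → ℤ)) (hΛ : Λ.index ≠ 0)
    (ℓ : Fin k → ℝ) (hℓ : ∀ i, 0 < ℓ i) :
    sSup {t : ℝ | ∃ m : Fin k → ℤ,
        t = sInf {s : ℝ | ∃ z : Fin k → ℤ, z - m ∈ Λ ∧ (∀ i, 0 ≤ z i) ∧
            s = ∑ i, (z i : ℝ) * ℓ i}}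
      = sSup {t : ℝ | ∃ y : Fin k → ℝ,
          t = sInf {s : ℝ | ∃ z : Fin k → ℝ,
              (∃ w ∈ Λ, z = y + fun i => (w i : ℝ)) ∧ (∀ i, 0 ≤ z i) ∧
                s = ∑ i, z i * ℓ i}}
        - ∑ i, ℓ i := by
  classical
  set L : ℝ := ∑ i, ℓ i with hL
  have hL0 : 0 ≤ L := Finset.sum_nonneg fun i _ => (hℓ i).le
  set D : (Fin k → ℤ) → ℝ := fun m => sInf (latS k Λ ℓ m) with hD
  set A : Set ℝ := {t : ℝ | ∃ m : Fin k → ℤ, t = D m} with hA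
  -- finiteness of A
  haveI : Finite ((Fin k → ℤ) ⧸ Λ) := by
    have := hΛ
    rw [AddSubgroup.index] at this
    exact (Nat.card_ne_zero.mp this).2
  set Dq : ((Fin k → ℤ) ⧸ Λ) → ℝ := fun q => D q.out with hDq
  have hfac : ∀ m : Fin k → ℤ, D m = Dq (QuotientAddGroup.mk m) := by
    intro m
    have h1 : (QuotientAddGroup.mk (s := Λ) ((QuotientAddGroup.mk (s := Λ) m).out))
        = QuotientAddGroup.mk (s := Λ) m := Quotient.out_eq _
    have h2 : m - (QuotientAddGroup.mk (s := Λ) m).out ∈ Λ := by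
      have := (QuotientAddGroup.eq (s := Λ)).mp h1
      simpa [neg_add_eq_sub] using this
    simp only [hD, hDq]
    rw [latS_coset h2]
  have hAfin : A.Finite := by
    apply (Set.finite_range Dq).subset
    rintro t ⟨m, rfl⟩
    exact ⟨QuotientAddGroup.mk m, (hfac m).symm⟩
  have hAne : A.Nonempty := ⟨D 0, 0, rfl⟩
  set M : ℝ := sSup A with hM
  obtain ⟨m₀, hm₀⟩ : M ∈ A := hAne.csSup_mem hAfin
  have hle : ∀ m, D m ≤ M := fun m => le_csSup hAfin.bddAbove ⟨m, rfl⟩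
  -- the continuous sup
  have hBsup : sSup {t : ℝ | ∃ y : Fin k → ℝ,
          t = sInf {s : ℝ | ∃ z : Fin k → ℝ,
              (∃ w ∈ Λ, z = y + fun i => (w i : ℝ)) ∧ (∀ i, 0 ≤ z i) ∧
                s = ∑ i, z i * ℓ i}} = M + L := by
    apply csSup_eq_of_forall_le_of_forall_lt_exists_gt
    · exact ⟨_, 0, rfl⟩
    · rintro t ⟨y, rfl⟩
      rw [sInf_latT hΛ hℓ y]
      have h1 : ∑ i, Int.fract (y i) * ℓ i ≤ L := by
        refine Finset.sum_le_sum fun i _ => ?_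
        nlinarith [Int.fract_lt_one (y i), Int.fract_nonneg (y i), hℓ i]
      have h2 : D (fun i => ⌊y i⌋) ≤ M := hle _
      linarith
    · intro w hw
      set ε : ℝ := M + L - w with hε
      have hε0 : 0 < ε := by simp [hε]; linarith
      set δ : ℝ := min (1/2) (ε / (L + 1)) with hδ
      have hδ0 : 0 < δ := lt_min (by norm_num) (by positivity)
      have hδ1 : δ < 1 := lt_of_le_of_lt (min_le_left _ _) (by norm_num)
      set y : Fin k → ℝ := fun i => (m₀ i : ℝ) + (1 - δ) with hy
      refine ⟨sInf {s : ℝ | ∃ z : Fin k → ℝ,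
              (∃ w ∈ Λ, z = y + fun i => (w i : ℝ)) ∧ (∀ i, 0 ≤ z i) ∧
                s = ∑ i, z i * ℓ i}, ⟨y, rfl⟩, ?_⟩
      rw [sInf_latT hΛ hℓ y]
      have hfr : ∀ i, Int.fract (y i) = 1 - δ := by
        intro i
        rw [hy]
        rw [Int.fract_intCast_add]
        exact Int.fract_eq_self.mpr ⟨by linarith, by linarith⟩
      have hfl : (fun i => ⌊y i⌋) = m₀ := by
        funext i
        have h0 : ⌊(1 : ℝ) - δ⌋ = 0 := Int.floor_eq_zero_iff.mpr ⟨by linarith, by linarith⟩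
        show ⌊(m₀ i : ℝ) + (1 - δ)⌋ = m₀ i
        rw [Int.floor_intCast_add, h0, add_zero]
      have hsum : ∑ i, Int.fract (y i) * ℓ i = (1 - δ) * L := by
        rw [hL, Finset.mul_sum]
        exact Finset.sum_congr rfl fun i _ => by rw [hfr i]
      rw [hsum, hfl]
      have hDm : sInf (latS k Λ ℓ m₀) = M := hm₀.symm
      have hδε : δ ≤ ε / (L + 1) := min_le_right _ _
      have : δ * L < ε := by
        have h3 : δ * L ≤ (ε / (L + 1)) * L := by nlinarith
        have h4 : (ε / (L + 1)) * L < ε := by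
          rw [div_mul_eq_mul_div, div_lt_iff₀ (by linarith)]
          nlinarith
        linarith
      linarith
  rw [hBsup]
  show M = M + L - L
  ring
end

section
/- For a full-rank sublattice $\Lambda \subset \mathbb{Z}^k$ and weights $\boldsymbol{\ell} \in \mathbb{R}_{>0}^k$, the diameter of the undirected quotient lattice graph satisfies $\operatorname{diam}_{\boldsymbol{\ell}}(\mathbb{R}^k/\Lambda) - \frac{1}{2}(\ell_1+\cdots+\ell_k) \leq \operatorname{diam}(LG_k/\Lambda) \leq \operatorname{diam}_{\boldsymbol{\ell}}(\mathbb{R}^k/\Lambda)$. -/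
open Finset

namespace DiamAux

variable {k : ℕ} (Λ : AddSubgroup (Fin k → ℤ)) (ℓ : Fin k → ℝ)

/-- The set of weighted ℓ¹ norms of real representatives of the coset `y + Λ`. -/
def Sc (y : Fin k → ℝ) : Set ℝ :=
  {s : ℝ | ∃ z : Fin k → ℝ, (∃ w ∈ Λ, z = y + fun i => (w i : ℝ)) ∧ s = ∑ i, |z i| * ℓ i}

noncomputable def f (y : Fin k → ℝ) : ℝ := sInf (Sc Λ ℓ y)

lemma Sc_nonempty (y : Fin k → ℝ) : (Sc Λ ℓ y).Nonempty :=
  ⟨∑ i, |y i| * ℓ i, y, ⟨0, Λ.zero_mem, by funext i; simp⟩, rfl⟩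

lemma Sc_bddBelow (hℓ : ∀ i, 0 < ℓ i) (y : Fin k → ℝ) : BddBelow (Sc Λ ℓ y) := by
  refine ⟨0, fun s hs => ?_⟩
  obtain ⟨z, _, rfl⟩ := hs
  exact Finset.sum_nonneg fun i _ => mul_nonneg (abs_nonneg _) (hℓ i).le

lemma f_le (hℓ : ∀ i, 0 < ℓ i) {y : Fin k → ℝ} {s : ℝ} (hs : s ∈ Sc Λ ℓ y) :
    f Λ ℓ y ≤ s := csInf_le (Sc_bddBelow Λ ℓ hℓ y) hs

/-- Integer cosets give the same set of values. -/
lemma Sc_int (m : Fin k → ℤ) :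
    {s : ℝ | ∃ z : Fin k → ℤ, z - m ∈ Λ ∧ s = ∑ i, |(z i : ℝ)| * ℓ i}
      = Sc Λ ℓ (fun i => (m i : ℝ)) := by
  ext s
  constructor
  · rintro ⟨z, hz, rfl⟩
    refine ⟨fun i => (z i : ℝ), ⟨z - m, hz, ?_⟩, rfl⟩
    funext i; simp
  · rintro ⟨z, ⟨w, hw, rfl⟩, rfl⟩
    exact ⟨m + w, by simpa using hw, Finset.sum_congr rfl fun i _ => by simp⟩

/-- Uniform upper bound on `f` using finite index. -/
lemma f_le_bound (hΛ : Λ.index ≠ 0) (hℓ : ∀ i, 0 < ℓ i) (y : Fin k → ℝ) :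
    f Λ ℓ y ≤ (Λ.index : ℝ) * ∑ i, ℓ i := by
  haveI : Λ.FiniteIndex := ⟨hΛ⟩
  set n : ℕ := Λ.index with hn
  have hn0 : (0 : ℝ) < n := by positivity
  set v : Fin k → ℤ := fun i => -⌊y i / n⌋ with hv
  have hwmem : n • v ∈ Λ := by
    have := AddSubgroup.nsmul_index_mem Λ v
    simpa [hn] using this
  have hzz : f Λ ℓ y ≤ ∑ i, |y i + ((n • v) i : ℝ)| * ℓ i :=
    f_le Λ ℓ hℓ ⟨_, ⟨n • v, hwmem, rfl⟩, rfl⟩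
  refine hzz.trans ?_
  rw [Finset.mul_sum]
  refine Finset.sum_le_sum fun i _ => ?_
  have hcoord : y i + ((n • v) i : ℝ) = y i - n * ⌊y i / n⌋ := by
    simp [hv]; ring
  have hle : (n : ℝ) * (⌊y i / n⌋ : ℝ) ≤ y i := by
    have h := mul_le_mul_of_nonneg_left (Int.floor_le (y i / n)) hn0.le
    rwa [mul_div_cancel₀ _ (ne_of_gt hn0)] at h
  have hlt : y i < (n : ℝ) * ((⌊y i / n⌋ : ℝ) + 1) := by
    have h := mul_lt_mul_of_pos_left (Int.lt_floor_add_one (y i / n)) hn0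
    rwa [mul_div_cancel₀ _ (ne_of_gt hn0)] at h
  have h1 : 0 ≤ y i - n * ⌊y i / n⌋ := by linarith
  have h2 : y i - n * ⌊y i / n⌋ < n := by nlinarith
  rw [hcoord, abs_of_nonneg h1]
  exact mul_le_mul_of_nonneg_right (by linarith) (hℓ i).le

/-- Rounding: comparing `f y` with `f` at the rounded integer point. -/
lemma f_round (hℓ : ∀ i, 0 < ℓ i) (y : Fin k → ℝ) (m : Fin k → ℤ)
    (hm : ∀ i, |y i - (m i : ℝ)| ≤ 1 / 2) :
    f Λ ℓ y ≤ f Λ ℓ (fun i => (m i : ℝ)) + (∑ i, ℓ i) / 2 := by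
  rw [← sub_le_iff_le_add]
  refine le_csInf (Sc_nonempty Λ ℓ _) ?_
  rintro s ⟨z, ⟨w, hw, rfl⟩, rfl⟩
  rw [sub_le_iff_le_add]
  have hmem : (∑ i, |y i + ((w i : ℝ))| * ℓ i) ∈ Sc Λ ℓ y := ⟨_, ⟨w, hw, rfl⟩, rfl⟩
  refine (f_le Λ ℓ hℓ hmem).trans ?_
  have : (∑ i, ℓ i) / 2 = ∑ i, (1 / 2) * ℓ i := by
    rw [Finset.sum_div]; exact Finset.sum_congr rfl fun i _ => by ring
  rw [this, ← Finset.sum_add_distrib]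
  refine Finset.sum_le_sum fun i _ => ?_
  have h1 : |y i + (w i : ℝ)| ≤ |(m i : ℝ) + (w i : ℝ)| + 1 / 2 := by
    have := hm i
    have := abs_sub_abs_le_abs_sub (y i + (w i : ℝ)) ((m i : ℝ) + (w i : ℝ))
    have h3 : |y i + (w i : ℝ) - ((m i : ℝ) + (w i : ℝ))| = |y i - (m i : ℝ)| := by
      ring_nf
    rw [h3] at this
    linarith
  calc |y i + (w i : ℝ)| * ℓ i ≤ (|(m i : ℝ) + (w i : ℝ)| + 1 / 2) * ℓ i :=
        mul_le_mul_of_nonneg_right h1 (hℓ i).le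
    _ = |((fun j => (m j : ℝ)) + fun j => (w j : ℝ)) i| * ℓ i + 1 / 2 * ℓ i := by
        simp; ring
  
end DiamAux

/-- For a finite-index sublattice `Λ ⊆ ℤ^k` and weights `ℓ ∈ ℝ_{>0}^k`, the diameter of the
undirected quotient lattice graph `LG_k/Λ` is bounded between
`diam_ℓ(ℝ^k/Λ) - (ℓ_1+⋯+ℓ_k)/2` and `diam_ℓ(ℝ^k/Λ)`. -/
theorem diam_undirected_quotient_lattice_graph
    (k : ℕ) (Λ : AddSubgroup (Fin k → ℤ)) (hΛ : Λ.index ≠ 0)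
    (ℓ : Fin k → ℝ) (hℓ : ∀ i, 0 < ℓ i) :
    sSup {t : ℝ | ∃ y : Fin k → ℝ,
        t = sInf {s : ℝ | ∃ z : Fin k → ℝ,
            (∃ w ∈ Λ, z = y + fun i => (w i : ℝ)) ∧ s = ∑ i, |z i| * ℓ i}}
      - (∑ i, ℓ i) / 2
      ≤ sSup {t : ℝ | ∃ m : Fin k → ℤ,
          t = sInf {s : ℝ | ∃ z : Fin k → ℤ, z - m ∈ Λ ∧
              s = ∑ i, |(z i : ℝ)| * ℓ i}} ∧
    sSup {t : ℝ | ∃ m : Fin k → ℤ,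
        t = sInf {s : ℝ | ∃ z : Fin k → ℤ, z - m ∈ Λ ∧
            s = ∑ i, |(z i : ℝ)| * ℓ i}}
      ≤ sSup {t : ℝ | ∃ y : Fin k → ℝ,
          t = sInf {s : ℝ | ∃ z : Fin k → ℝ,
              (∃ w ∈ Λ, z = y + fun i => (w i : ℝ)) ∧ s = ∑ i, |z i| * ℓ i}} := by
  classical
  open DiamAux in
  -- identify the statement's sets with `f`
  have hT : {t : ℝ | ∃ y : Fin k → ℝ,
        t = sInf {s : ℝ | ∃ z : Fin k → ℝ,
            (∃ w ∈ Λ, z = y + fun i => (w i : ℝ)) ∧ s = ∑ i, |z i| * ℓ i}}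
      = {t : ℝ | ∃ y : Fin k → ℝ, t = f Λ ℓ y} := rfl
  have hT' : {t : ℝ | ∃ m : Fin k → ℤ,
        t = sInf {s : ℝ | ∃ z : Fin k → ℤ, z - m ∈ Λ ∧
            s = ∑ i, |(z i : ℝ)| * ℓ i}}
      = {t : ℝ | ∃ m : Fin k → ℤ, t = f Λ ℓ (fun i => (m i : ℝ))} := by
    simp only [Sc_int Λ ℓ]; rfl
  rw [hT, hT']
  set T : Set ℝ := {t : ℝ | ∃ y : Fin k → ℝ, t = f Λ ℓ y} with hTdef
  set T' : Set ℝ := {t : ℝ | ∃ m : Fin k → ℤ, t = f Λ ℓ (fun i => (m i : ℝ))} with hT'def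
  have hsub : T' ⊆ T := by rintro t ⟨m, rfl⟩; exact ⟨_, rfl⟩
  have hTne : T.Nonempty := ⟨_, 0, rfl⟩
  have hT'ne : T'.Nonempty := ⟨_, 0, rfl⟩
  have hTB : BddAbove T := by
    refine ⟨(Λ.index : ℝ) * ∑ i, ℓ i, ?_⟩
    rintro t ⟨y, rfl⟩
    exact f_le_bound Λ ℓ hΛ hℓ y
  have hT'B : BddAbove T' := hTB.mono hsub
  constructor
  · rw [sub_le_iff_le_add]
    refine csSup_le hTne ?_
    rintro t ⟨y, rfl⟩
    have hround : ∀ i, |y i - ((round (y i) : ℤ) : ℝ)| ≤ 1 / 2 := fun i => by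
      simpa using abs_sub_round (y i)
    calc f Λ ℓ y ≤ f Λ ℓ (fun i => ((round (y i) : ℤ) : ℝ)) + (∑ i, ℓ i) / 2 :=
          f_round Λ ℓ hℓ y (fun i => round (y i)) hround
      _ ≤ sSup T' + (∑ i, ℓ i) / 2 := by
          have : f Λ ℓ (fun i => ((round (y i) : ℤ) : ℝ)) ∈ T' :=
            ⟨fun i => round (y i), rfl⟩
          linarith [le_csSup hT'B this]
  · exact csSup_le_csSup hTB hT'ne hsub
end

section
/- For $k \geq 3$ there does not exist any subset $P \subset \mathbb{R}^k$ such that $P + \mathfrak{P} = \mathbb{R}^k$ and the translates $\mathbf{r} + \mathfrak{P}^\circ$, $\mathbf{r} \in P$, are pairwise disjoint. In other words, the cross-polytope $\mathfrak{P}$ does not tile $\mathbb{R}^k$ by translations for $k \geq 3$. -/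
/-!
Translate the tiling so that `0` is a centre; in the ℓ¹ metric the centres then form a set `Q`
that is `2`-separated and `1`-dense. A point `y > 0` of the facet `∑ yᵢ = 1` of the tile at `0` is
a limit of points outside that tile, so by local finiteness another tile `r + 𝔓` contains `y`;
as `dist 0 r ≥ 2`, the point `y` lies coordinatewise between `0` and `r`, whence `y ≤ r` and
`∑ rᵢ = 2`. Take such an `r` above the barycentre and `j` with `r j < 1`. For facet points `x`
with `x j = r j` and `xᵢ < rᵢ` otherwise, a tile `s + 𝔓` containing `x` with `s j > x j` is at
distance `2` from `r`, so `x` lies between `r` and `s` and `sᵢ = xᵢ` for `i ≠ j`. When `k ≥ 3`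
such `x` form a continuum, giving infinitely many centres in a bounded set.
-/

open Pointwise Set Filter Metric Topology WithLp

theorem Metric.finite_isBounded_inter_of_pairwise_le_dist {α : Type*} [MetricSpace α]
    [ProperSpace α] {s K : Set α} {ε : ℝ} (hε : 0 < ε) (hs : s.Pairwise (ε ≤ dist · ·))
    (hK : Bornology.IsBounded K) : (K ∩ s).Finite := by
  have : DiscreteTopology s :=
    .of_forall_le_dist hε fun x y hxy => hs x.2 y.2 (Subtype.coe_ne_coe.mpr hxy)
  exact finite_isBounded_inter_isClosed (isDiscrete_iff_discreteTopology.mpr this) hK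
    (isClosed_of_pairwise_le_dist hε hs)

theorem Metric.isClosed_biUnion_closedBall_of_pairwise_le_dist {α : Type*} [MetricSpace α]
    [ProperSpace α] {s : Set α} {ε : ℝ} (hε : 0 < ε) (hs : s.Pairwise (ε ≤ dist · ·))
    (r : ℝ) : IsClosed (⋃ q ∈ s, closedBall q r) := by
  rw [biUnion_eq_iUnion]
  refine LocallyFinite.isClosed_iUnion (fun x => ⟨ball x 1, ball_mem_nhds x one_pos, ?_⟩)
    fun q => isClosed_closedBall
  refine ((finite_isBounded_inter_of_pairwise_le_dist hε hs
    (isBounded_closedBall (x := x) (r := r + 1))).preimage Subtype.val_injective.injOn).subset ?_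
  rintro q ⟨y, hyq, hyx⟩
  refine ⟨?_, q.2⟩
  rw [mem_closedBall] at hyq ⊢
  rw [mem_ball] at hyx
  linarith [dist_triangle_left (q : α) x y]

local notation "ℓ¹[" ι "]" => PiLp 1 fun _ : ι => ℝ

section

variable {ι : Type*} [Fintype ι]

theorem dist_eq_sum_abs_sub (x y : ℓ¹[ι]) : dist x y = ∑ i, |x i - y i| := by
  simp_rw [PiLp.dist_eq_of_L1, Real.dist_eq]

theorem dist_eq_sum_sub_sum_of_le {x q : ℓ¹[ι]} (h : ∀ i, x i ≤ q i) :
    dist x q = ∑ i, q i - ∑ i, x i := by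
  rw [dist_eq_sum_abs_sub, ← Finset.sum_sub_distrib]
  exact Finset.sum_congr rfl fun i _ => by rw [abs_sub_comm, abs_of_nonneg (sub_nonneg.2 (h i))]

theorem apply_le_of_dist_le_sum_sub_sum {x q : ℓ¹[ι]} (h : dist x q ≤ ∑ i, q i - ∑ i, x i)
    (i : ι) : x i ≤ q i := by
  have hle : ∀ i ∈ Finset.univ, q i - x i ≤ |x i - q i| := fun i _ => by
    rw [abs_sub_comm]; exact le_abs_self _
  rw [dist_eq_sum_abs_sub, ← Finset.sum_sub_distrib] at h
  have heq := (Finset.sum_eq_sum_iff_of_le hle).1 (le_antisymm (Finset.sum_le_sum hle) h) i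
    (Finset.mem_univ i)
  linarith [abs_nonneg (x i - q i)]

theorem mem_uIcc_of_dist_add_dist_le {p y q : ℓ¹[ι]} (h : dist p y + dist y q ≤ dist p q)
    (i : ι) : y i ∈ uIcc (p i) (q i) := by
  have hle : ∀ i ∈ Finset.univ, |p i - q i| ≤ |p i - y i| + |y i - q i| := fun i _ =>
    abs_sub_le _ _ _
  rw [dist_eq_sum_abs_sub, dist_eq_sum_abs_sub, dist_eq_sum_abs_sub,
    ← Finset.sum_add_distrib] at h
  have heq := (Finset.sum_eq_sum_iff_of_le hle).1 (le_antisymm (Finset.sum_le_sum hle) h) i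
    (Finset.mem_univ i)
  rw [← sub_add_sub_cancel (p i) (y i) (q i), abs_add_eq_add_abs_iff] at heq
  rw [mem_uIcc]
  rcases heq with ⟨h₁, h₂⟩ | ⟨h₁, h₂⟩
  · right; constructor <;> linarith
  · left; constructor <;> linarith

variable (ι) in
def posFacet : Set ℓ¹[ι] := {x | (∀ i, 0 < x i) ∧ ∑ i, x i = 1}

theorem tendsto_add_smul_nhds_zero {E : Type*} [SeminormedAddCommGroup E] [NormedSpace ℝ E]
    (y v : E) : Tendsto (fun e : ℝ => y + e • v) (𝓝 0) (𝓝 y) := by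
  have : Continuous fun e : ℝ => y + e • v := by fun_prop
  simpa using this.tendsto 0

theorem eventually_add_smul_mem_posFacet {y v : ℓ¹[ι]} (hy : y ∈ posFacet ι)
    (hv : ∑ i, v i = 0) : ∀ᶠ e in 𝓝 (0 : ℝ), y + e • v ∈ posFacet ι := by
  have hpos : ∀ᶠ e in 𝓝 (0 : ℝ), ∀ i, 0 < (y + e • v) i := eventually_all.2 fun i =>
    (((PiLp.continuous_apply 1 _ i).tendsto y).comp
      (tendsto_add_smul_nhds_zero y v)).eventually_const_lt (hy.1 i)
  filter_upwards [hpos] with e he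
  refine ⟨he, ?_⟩
  simp only [PiLp.add_apply, PiLp.smul_apply, smul_eq_mul, Finset.sum_add_distrib,
    ← Finset.mul_sum, hv, hy.2, mul_zero, add_zero]

theorem eventually_forall_ne_add_smul_apply_lt {z r : ℓ¹[ι]} {j : ι} (h : ∀ i ≠ j, z i < r i)
    (v : ℓ¹[ι]) : ∀ᶠ e in 𝓝 (0 : ℝ), ∀ i ≠ j, (z + e • v) i < r i := by
  refine eventually_all.2 fun i => ?_
  rcases eq_or_ne i j with rfl | hi
  · exact Eventually.of_forall fun _ h => absurd rfl h
  · filter_upwards [(((PiLp.continuous_apply 1 _ i).tendsto z).comp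
      (tendsto_add_smul_nhds_zero z v)).eventually_lt_const (h i hi)] with e he _ using he

theorem exists_mem_posFacet_apply_eq_apply_lt {r : ℓ¹[ι]} (hr : ∀ i, 0 < r i)
    (hr2 : ∑ i, r i = 2) {j : ι} (hj : r j < 1) :
    ∃ z ∈ posFacet ι, z j = r j ∧ ∀ i ≠ j, z i < r i := by
  classical
  -- `c` solves `c * 2 + (1 - c) * r j = 1`, the coordinate sum of `z`
  set c := (1 - r j) / (2 - r j)
  have hd : 0 < 2 - r j := by linarith
  have hc0 : 0 < c := div_pos (by linarith) hd
  have hc1 : c < 1 := (div_lt_one (by linarith)).2 (by linarith)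
  have hz : ∀ i, (c • r + ((1 - c) * r j) • PiLp.single 1 j 1 : ℓ¹[ι]) i =
      c * r i + (1 - c) * r j * if i = j then 1 else 0 := fun i => by
    simp [PiLp.single_apply]
  refine ⟨c • r + ((1 - c) * r j) • PiLp.single 1 j 1, ⟨fun i => ?_, ?_⟩, ?_,
    fun i hi => ?_⟩
  · rw [hz]
    have := mul_pos hc0 (hr i)
    have := mul_nonneg (sub_nonneg.2 hc1.le) (hr j).le
    split_ifs <;> nlinarith
  · simp only [hz, Finset.sum_add_distrib, ← Finset.mul_sum, hr2, Finset.sum_ite_eq',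
      Finset.mem_univ, if_true, mul_one, c]
    field_simp [hd.ne']
    ring
  · rw [hz, if_pos rfl]
    ring
  · rw [hz, if_neg hi, mul_zero, add_zero]
    exact mul_lt_of_lt_one_left (hr i) hc1

/-- The translates `q + 𝔓`, `q ∈ Q`, tile space; in the ℓ¹ distance their interiors are
disjoint exactly when the centres are `2`-separated. -/
structure IsCrossPolytopeTiling (Q : Set ℓ¹[ι]) : Prop where
  exists_dist_le_one : ∀ x, ∃ q ∈ Q, dist x q ≤ 1
  pairwise_two_le_dist : Q.Pairwise (2 ≤ dist · ·)

namespace IsCrossPolytopeTiling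

variable {Q : Set ℓ¹[ι]} (hQ : IsCrossPolytopeTiling Q)
include hQ

theorem preimage_add_right (p : ℓ¹[ι]) : IsCrossPolytopeTiling ((· + p) ⁻¹' Q) where
  exists_dist_le_one x := by
    obtain ⟨q, hq, hxq⟩ := hQ.exists_dist_le_one (x + p)
    exact ⟨q - p, by simpa using hq, by rwa [← dist_add_right x _ p, sub_add_cancel]⟩
  pairwise_two_le_dist q hq q' hq' hne := by
    simpa using hQ.pairwise_two_le_dist hq hq' (by simpa using hne)

theorem exists_ge_of_mem_posFacet (h0 : 0 ∈ Q) {y : ℓ¹[ι]} (hy : y ∈ posFacet ι) :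
    ∃ q ∈ Q, (∀ i, y i ≤ q i) ∧ ∑ i, q i = 2 := by
  have hdist0 : ∀ c : ℝ, 0 ≤ c → dist (0 : ℓ¹[ι]) (c • y) = c := fun c hc => by
    rw [dist_eq_sum_sub_sum_of_le fun i => ?_]
    · simp [← Finset.mul_sum, hy.2]
    · simpa using mul_nonneg hc (hy.1 i).le
  have hclosed := isClosed_biUnion_closedBall_of_pairwise_le_dist (s := Q \ {0}) two_pos
    (hQ.pairwise_two_le_dist.mono sdiff_subset) 1
  have hscaled : ∀ᶠ c in 𝓝[>] (1 : ℝ), c • y ∈ ⋃ q ∈ Q \ {0}, closedBall q 1 := by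
    filter_upwards [self_mem_nhdsWithin] with c hc
    obtain ⟨q, hq, hcq⟩ := hQ.exists_dist_le_one (c • y)
    refine mem_biUnion ⟨hq, fun hq0 => ?_⟩ hcq
    rw [mem_singleton_iff.1 hq0, dist_comm, hdist0 c (by linarith [mem_Ioi.1 hc])] at hcq
    exact absurd hcq (not_le.2 hc)
  have hlim : Tendsto (fun c : ℝ => c • y) (𝓝[>] 1) (𝓝 y) := by
    have : Continuous fun c : ℝ => c • y := by fun_prop
    simpa using (this.tendsto 1).mono_left nhdsWithin_le_nhds
  obtain ⟨q, ⟨hq, hq0⟩, hyq⟩ := mem_iUnion₂.1 (hclosed.mem_of_tendsto hlim hscaled)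
  rw [mem_closedBall] at hyq
  have h2 : 2 ≤ dist 0 q := hQ.pairwise_two_le_dist h0 hq (Ne.symm hq0)
  have h1 : dist 0 y = 1 := by simpa using hdist0 1 zero_le_one
  have hyle : ∀ i, y i ≤ q i := fun i => by
    rcases mem_uIcc.1 (mem_uIcc_of_dist_add_dist_le (p := 0) (q := q) (by linarith) i) with h | h
    · exact h.2
    · exact absurd h.2 (not_le.2 (hy.1 i))
  have hsum := dist_eq_sum_sub_sum_of_le hyle
  rw [hy.2] at hsum
  refine ⟨q, hq, hyle, le_antisymm (by linarith) ?_⟩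
  linarith [dist_triangle (0 : ℓ¹[ι]) y q]

theorem exists_ge_lt_apply_of_mem_posFacet [Nontrivial ι] (h0 : 0 ∈ Q) {y : ℓ¹[ι]}
    (hy : y ∈ posFacet ι) (j : ι) :
    ∃ q ∈ Q, (∀ i, y i ≤ q i) ∧ y j < q j ∧ ∑ i, q i = 2 := by
  classical
  obtain ⟨a, haj⟩ := exists_ne j
  set v : ℓ¹[ι] := PiLp.single 1 j 1 - PiLp.single 1 a 1
  have hv : ∑ i, v i = 0 := by simp [v]
  have hvj : v j = 1 := by simp [v, haj.symm]
  set R := {q ∈ Q | y j < q j ∧ ∑ i, q i = 2}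
  have hclosed := isClosed_biUnion_closedBall_of_pairwise_le_dist (s := R) two_pos
    (hQ.pairwise_two_le_dist.mono (sep_subset Q _)) 1
  have hshift : ∀ᶠ e in 𝓝[>] (0 : ℝ), y + e • v ∈ ⋃ q ∈ R, closedBall q 1 := by
    filter_upwards [self_mem_nhdsWithin,
      nhdsWithin_le_nhds (eventually_add_smul_mem_posFacet hy hv)] with e he hmem
    obtain ⟨q, hq, hle, hsum⟩ := hQ.exists_ge_of_mem_posFacet h0 hmem
    refine mem_biUnion ⟨hq, ?_, hsum⟩ ?_
    · have := hle j
      simp only [PiLp.add_apply, PiLp.smul_apply, hvj, smul_eq_mul, mul_one] at this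
      linarith [mem_Ioi.1 he]
    · rw [mem_closedBall, dist_eq_sum_sub_sum_of_le hle, hsum, hmem.2]
      norm_num
  have hlim : Tendsto (fun e : ℝ => y + e • v) (𝓝[>] 0) (𝓝 y) :=
    (tendsto_add_smul_nhds_zero y v).mono_left nhdsWithin_le_nhds
  obtain ⟨q, ⟨hq, hqj, hsum⟩, hyq⟩ := mem_iUnion₂.1 (hclosed.mem_of_tendsto hlim hshift)
  refine ⟨q, hq, apply_le_of_dist_le_sum_sub_sum ?_, hqj, hsum⟩
  rw [hsum, hy.2]
  linarith [mem_closedBall.1 hyq]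

theorem exists_apply_eq_of_mem_posFacet [Nontrivial ι] (h0 : 0 ∈ Q) {r x : ℓ¹[ι]}
    (hr : r ∈ Q) (hr2 : ∑ i, r i = 2) (hx : x ∈ posFacet ι) {j : ι} (hxj : x j = r j)
    (hxr : ∀ i ≠ j, x i < r i) :
    ∃ s ∈ Q, (∀ i, x i ≤ s i) ∧ ∑ i, s i = 2 ∧ ∀ i ≠ j, s i = x i := by
  obtain ⟨s, hs, hxs, hsj, hs2⟩ := hQ.exists_ge_lt_apply_of_mem_posFacet h0 hx j
  have hrs : r ≠ s := fun h => by rw [← h, hxj] at hsj; exact lt_irrefl _ hsj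
  have hxr' : ∀ i, x i ≤ r i := fun i => by
    rcases eq_or_ne i j with rfl | hi
    · exact hxj.le
    · exact (hxr i hi).le
  have hbetween : dist r x + dist x s ≤ dist r s := by
    rw [dist_comm, dist_eq_sum_sub_sum_of_le hxr', dist_eq_sum_sub_sum_of_le hxs, hr2, hs2, hx.2]
    linarith [hQ.pairwise_two_le_dist hr hs hrs]
  refine ⟨s, hs, hxs, hs2, fun i hi => le_antisymm ?_ (hxs i)⟩
  rcases mem_uIcc.1 (mem_uIcc_of_dist_add_dist_le hbetween i) with h | h
  · linarith [hxr i hi]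
  · exact h.1

theorem exists_pos_sum_eq_two_apply_lt_one (h0 : 0 ∈ Q) (hι : 3 ≤ Fintype.card ι) :
    ∃ r ∈ Q, (∀ i, 0 < r i) ∧ ∑ i, r i = 2 ∧ ∃ j, r j < 1 := by
  have hcard : (0 : ℝ) < Fintype.card ι := by exact_mod_cast (by omega : 0 < Fintype.card ι)
  obtain ⟨r, hr, hbr, hr2⟩ := hQ.exists_ge_of_mem_posFacet h0
    (y := toLp 1 fun _ => (Fintype.card ι : ℝ)⁻¹)
    ⟨fun _ => by simpa using hcard, by simp [hcard.ne']⟩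
  refine ⟨r, hr, fun i => (inv_pos.2 hcard).trans_le (by simpa using hbr i), hr2, ?_⟩
  by_contra! h
  have : ∑ _i : ι, (1 : ℝ) ≤ ∑ i, r i := Finset.sum_le_sum fun i _ => h i
  rw [Finset.sum_const, Finset.card_univ, nsmul_one] at this
  have : (3 : ℝ) ≤ Fintype.card ι := by exact_mod_cast hι
  linarith

theorem card_lt_three_of_zero_mem (h0 : 0 ∈ Q) : Fintype.card ι < 3 := by
  classical
  by_contra! hι
  have : Nontrivial ι := Fintype.one_lt_card_iff_nontrivial.1 (by omega)
  obtain ⟨r, hr, hrpos, hr2, j, hj⟩ := hQ.exists_pos_sum_eq_two_apply_lt_one h0 hι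
  obtain ⟨a, b, ha, hb, hab⟩ := (Finset.one_lt_card_iff (s := Finset.univ.erase j)).1
    (by rw [Finset.card_erase_of_mem (Finset.mem_univ j), Finset.card_univ]; omega)
  rw [Finset.mem_erase] at ha hb
  obtain ⟨z, hz, hzj, hzr⟩ := exists_mem_posFacet_apply_eq_apply_lt hrpos hr2 hj
  set v : ℓ¹[ι] := PiLp.single 1 a 1 - PiLp.single 1 b 1
  have hva : v a = 1 := by simp [v, hab]
  have hvj : v j = 0 := by simp [v, ha.1.symm, hb.1.symm]
  set x : ℝ → ℓ¹[ι] := fun e => z + e • v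
  have hxj : ∀ e, x e j = r j := fun e => by simp [x, hvj, hzj]
  have hxa : ∀ e, x e a = z a + e := fun e => by simp [x, hva]
  set S := {e : ℝ | x e ∈ posFacet ι ∧ ∀ i ≠ j, x e i < r i}
  have hS : S ∈ 𝓝 (0 : ℝ) := (eventually_add_smul_mem_posFacet hz (by simp [v])).and
    (eventually_forall_ne_add_smul_apply_lt hzr v)
  choose! s hsQ hxs hs2 hsx using fun e (he : e ∈ S) =>
    hQ.exists_apply_eq_of_mem_posFacet h0 hr hr2 he.1 (hxj e) he.2
  have hinj : InjOn s S := fun e he e' he' h => by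
    have := congrArg (fun q : ℓ¹[ι] => q a) h
    simp only [hsx e he a ha.1, hsx e' he' a ha.1, hxa] at this
    linarith
  have hmaps : MapsTo s S (closedBall 0 2 ∩ Q) := fun e he => by
    refine ⟨?_, hsQ e he⟩
    rw [mem_closedBall, dist_comm, dist_eq_sum_sub_sum_of_le fun i => ?_]
    · simp [hs2 e he]
    · simpa using (he.1.1 i).le.trans (hxs e he i)
  exact infinite_of_injOn_mapsTo hinj hmaps (infinite_of_mem_nhds 0 hS)
    (finite_isBounded_inter_of_pairwise_le_dist two_pos hQ.pairwise_two_le_dist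
      isBounded_closedBall)

theorem card_lt_three : Fintype.card ι < 3 := by
  obtain ⟨q, hq, -⟩ := hQ.exists_dist_le_one 0
  exact (hQ.preimage_add_right q).card_lt_three_of_zero_mem (by simpa using hq)

end IsCrossPolytopeTiling

theorem isCrossPolytopeTiling_preimage_ofLp {P : Set (ι → ℝ)}
    (hcover : P + {x : ι → ℝ | ∑ i, |x i| ≤ 1} = univ)
    (hdisj : ∀ r ∈ P, ∀ s ∈ P, r ≠ s →
      Disjoint {x | x - r ∈ interior {x : ι → ℝ | ∑ i, |x i| ≤ 1}}
        {x | x - s ∈ interior {x : ι → ℝ | ∑ i, |x i| ≤ 1}}) :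
    IsCrossPolytopeTiling (ofLp ⁻¹' P : Set ℓ¹[ι]) where
  exists_dist_le_one x := by
    obtain ⟨p, hp, y, hy, hpy⟩ := mem_add.1 (hcover ▸ mem_univ (ofLp x))
    refine ⟨toLp 1 p, by simpa using hp, ?_⟩
    simpa [dist_eq_sum_abs_sub, ← hpy] using hy
  pairwise_two_le_dist q hq q' hq' hne := by
    by_contra! hlt
    have hsub :
        {z : ι → ℝ | ∑ i, |z i| < 1} ⊆ interior {x : ι → ℝ | ∑ i, |x i| ≤ 1} :=
      interior_maximal (ofPred_subset_ofPred.2 fun _ => le_of_lt)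
        (isOpen_lt (by fun_prop) continuous_const)
    have hint : ∀ {x y : ℓ¹[ι]}, dist x y < 1 →
        ofLp x - ofLp y ∈ interior {x : ι → ℝ | ∑ i, |x i| ≤ 1} := fun h =>
      hsub (by simpa [dist_eq_sum_abs_sub] using h)
    have hm : dist (midpoint ℝ q q') q < 1 := by
      rw [dist_comm, dist_left_midpoint]; norm_num; linarith
    have hm' : dist (midpoint ℝ q q') q' < 1 := by
      rw [dist_comm, dist_right_midpoint]; norm_num; linarith
    exact disjoint_left.1 (hdisj _ hq _ hq' fun h => hne (ofLp_injective 1 h)) (hint hm)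
      (hint hm')

end

/-- For `k ≥ 3`, the cross-polytope `𝔓 = {x ∈ ℝ^k : ∑|x_i| ≤ 1}` does not tile `ℝ^k` by
translations: there is no set `P ⊆ ℝ^k` with `P + 𝔓 = ℝ^k` such that the translated open
cross-polytopes `r + 𝔓°`, `r ∈ P`, are pairwise disjoint. -/
theorem crosspolytope_no_tiling (k : ℕ) (hk : 3 ≤ k) :
    ¬ ∃ P : Set (Fin k → ℝ),
        P + {x : Fin k → ℝ | (∑ i, |x i|) ≤ 1} = Set.univ ∧
        ∀ r ∈ P, ∀ s ∈ P, r ≠ s →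
          Disjoint {x : Fin k → ℝ | x - r ∈ interior {x : Fin k → ℝ | (∑ i, |x i|) ≤ 1}}
            {x : Fin k → ℝ | x - s ∈ interior {x : Fin k → ℝ | (∑ i, |x i|) ≤ 1}} := by
  rintro ⟨P, hcover, hdisj⟩
  have := (isCrossPolytopeTiling_preimage_ofLp hcover hdisj).card_lt_three
  rw [Fintype.card_fin] at this
  omega
end

section
/- If $P + \mathfrak{P} = \mathbb{R}^k$ with the open translates $\mathbf{r}+\mathfrak{P}^\circ$ ($\mathbf{r}\in P$) pairwise disjoint and $\mathbf{0}\in P$, then for every $\mathbf{x}\in\mathbb{R}_{>0}^k$ with $x_1+\cdots+x_k = 1$ there exists $\mathbf{r}\in P\setminus\{\mathbf{0}\}$ with $r_j \geq x_j$ for all $j$ and $r_1+\cdots+r_k = 2$. -/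
/-!
Since the open unit `ℓ¹`-balls around `P` are disjoint, distinct points of `P` are at distance
at least `2`. Hence every nonzero `r ∈ P` has `‖r‖₁ ≥ 2`, and `P \ {0}` is closed. The centre
covering `(1 + t) x` is nonzero and within `1 + t` of `x`; letting `t ↓ 0`, the distance from
`x` to the closed set `P \ {0}` is at most `1` and, by compactness of balls, attained at some
`r`. Then `2 ≤ ‖r‖₁ ≤ ‖x‖₁ + ‖r - x‖₁ ≤ 2` is an equality case of the triangle inequality, which in
`ℓ¹` forces `r - x` to have the same sign as `x > 0` in every coordinate.
-/

open Pointwise Metric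

section TilingByUnitBalls

variable {E : Type*} [NormedAddCommGroup E] [NormedSpace ℝ E] {P : Set E}

lemma two_le_dist_of_pairwise_disjoint_ball
    (hdisj : P.Pairwise fun r s => Disjoint (ball r 1) (ball s 1))
    {r s : E} (hr : r ∈ P) (hs : s ∈ P) (hne : r ≠ s) : 2 ≤ dist r s := by
  have := (disjoint_ball_ball_iff one_pos one_pos).1 (hdisj hr hs hne)
  linarith

lemma two_le_norm_of_pairwise_disjoint_ball
    (hdisj : P.Pairwise fun r s => Disjoint (ball r 1) (ball s 1))
    (h0 : 0 ∈ P) {r : E} (hr : r ∈ P) (hne : r ≠ 0) : 2 ≤ ‖r‖ := by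
  simpa using two_le_dist_of_pairwise_disjoint_ball hdisj hr h0 hne

lemma isClosed_of_pairwise_disjoint_ball
    (hdisj : P.Pairwise fun r s => Disjoint (ball r 1) (ball s 1)) : IsClosed P :=
  isClosed_of_pairwise_le_dist two_pos fun _ hr _ hs hne =>
    two_le_dist_of_pairwise_disjoint_ball hdisj hr hs hne

theorem exists_ne_zero_dist_le_one_of_norm_eq_one [ProperSpace E]
    (hcover : ∀ y, ∃ r ∈ P, dist y r ≤ 1)
    (hdisj : P.Pairwise fun r s => Disjoint (ball r 1) (ball s 1))
    {x : E} (hx : ‖x‖ = 1) : ∃ r ∈ P, r ≠ 0 ∧ dist x r ≤ 1 := by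
  have approx : ∀ t : ℝ, 0 < t → ∃ r ∈ P \ {0}, dist x r ≤ 1 + t := by
    intro t ht
    obtain ⟨r, hrP, hr⟩ := hcover ((1 + t) • x)
    have hscaled : ‖(1 + t) • x‖ = 1 + t := by
      rw [norm_smul, hx, mul_one, Real.norm_of_nonneg (by linarith)]
    have hxy : dist x ((1 + t) • x) = t := by
      rw [dist_comm, dist_eq_norm, add_smul, one_smul, add_sub_cancel_left, norm_smul, hx,
        mul_one, Real.norm_of_nonneg ht.le]
    refine ⟨r, ⟨hrP, fun h0 => ?_⟩, ?_⟩
    · rw [Set.mem_singleton_iff.1 h0, dist_zero_right, hscaled] at hr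
      linarith
    · linarith [dist_triangle x ((1 + t) • x) r]
  have hclosed : IsClosed (P \ {0}) :=
    isClosed_of_pairwise_disjoint_ball (hdisj.mono Set.sdiff_subset)
  obtain ⟨r, hr, hdist⟩ :=
    hclosed.exists_infDist_eq_dist ((approx 1 one_pos).imp fun _ h => h.1) x
  refine ⟨r, hr.1, hr.2, hdist ▸ le_of_forall_pos_le_add fun t ht => ?_⟩
  obtain ⟨s, hs, hst⟩ := approx t ht
  exact (infDist_le_dist_of_mem hs).trans hst

end TilingByUnitBalls

section L1

variable {ι : Type*} [Fintype ι]

lemma le_of_sum_add_sum_abs_sub_le_sum_abs {x r : ι → ℝ}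
    (hx : ∀ j, 0 < x j) (h : ∑ j, x j + ∑ j, |x j - r j| ≤ ∑ j, |r j|) (j : ι) :
    x j ≤ r j := by
  by_contra! hj
  have hle : ∀ i ∈ Finset.univ, |r i| ≤ x i + |x i - r i| := fun i _ => by
    have := abs_sub_abs_le_abs_sub (r i) (x i)
    rw [abs_sub_comm, abs_of_pos (hx i)] at this
    linarith
  have hlt : |r j| < x j + |x j - r j| := by
    rw [abs_of_pos (sub_pos.2 hj)]
    cases abs_cases (r j) <;> linarith [hx j]
  have := Finset.sum_lt_sum hle ⟨j, Finset.mem_univ j, hlt⟩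
  rw [Finset.sum_add_distrib] at this
  linarith

lemma le_and_sum_eq_two_of_sum_abs {x r : ι → ℝ}
    (hx : ∀ j, 0 < x j) (hsum : ∑ j, x j = 1) (hr : 2 ≤ ∑ j, |r j|)
    (hxr : ∑ j, |x j - r j| ≤ 1) : (∀ j, x j ≤ r j) ∧ ∑ j, r j = 2 := by
  have hle : ∀ j, x j ≤ r j :=
    le_of_sum_add_sum_abs_sub_le_sum_abs hx (by linarith)
  have hsum_r : ∑ j, r j = ∑ j, x j + ∑ j, |x j - r j| := by
    rw [← Finset.sum_add_distrib]
    refine Finset.sum_congr rfl fun j _ => ?_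
    rw [abs_sub_comm, abs_of_nonneg (sub_nonneg.2 (hle j))]
    ring
  have habs : ∑ j, |r j| = ∑ j, r j :=
    Finset.sum_congr rfl fun j _ => abs_of_nonneg ((hx j).le.trans (hle j))
  exact ⟨hle, by linarith⟩

lemma dist_eq_sum_abs_of_L1 (u v : PiLp 1 fun _ : ι => ℝ) :
    dist u v = ∑ i, |u i - v i| := by
  simp [PiLp.dist_eq_of_L1, Real.dist_eq]

lemma exists_dist_le_one_of_L1 {P : Set (ι → ℝ)}
    (hcover : P + {x : ι → ℝ | (∑ i, |x i|) ≤ 1} = Set.univ) (y : PiLp 1 fun _ : ι => ℝ) :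
    ∃ r ∈ WithLp.ofLp ⁻¹' P, dist y r ≤ 1 := by
  obtain ⟨a, ha, b, hb, hab⟩ := Set.mem_add.1 (hcover ▸ Set.mem_univ y.ofLp)
  refine ⟨WithLp.toLp 1 a, ha, ?_⟩
  rw [dist_eq_sum_abs_of_L1, ← hab]
  simpa using hb

lemma sum_abs_lt_one_subset_interior :
    {x : ι → ℝ | (∑ i, |x i|) < 1} ⊆ interior {x : ι → ℝ | (∑ i, |x i|) ≤ 1} :=
  interior_maximal (Set.ofPred_subset_ofPred_of_imp fun _ => le_of_lt)
    (isOpen_lt (by fun_prop) continuous_const)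

lemma pairwise_disjoint_ball_of_L1 {P : Set (ι → ℝ)}
    (hdisj : ∀ r ∈ P, ∀ s ∈ P, r ≠ s →
      Disjoint {x : ι → ℝ | x - r ∈ interior {x : ι → ℝ | (∑ i, |x i|) ≤ 1}}
        {x : ι → ℝ | x - s ∈ interior {x : ι → ℝ | (∑ i, |x i|) ≤ 1}}) :
    (WithLp.ofLp ⁻¹' P : Set (PiLp 1 fun _ : ι => ℝ)).Pairwise
      fun r s => Disjoint (ball r 1) (ball s 1) := by
  intro r hr s hs hne
  have mem_interior : ∀ {z c : PiLp 1 fun _ : ι => ℝ}, z ∈ ball c 1 →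
      z.ofLp - c.ofLp ∈ interior {x : ι → ℝ | (∑ i, |x i|) ≤ 1} := fun hz =>
    sum_abs_lt_one_subset_interior (by simpa [mem_ball, dist_eq_sum_abs_of_L1] using hz)
  exact Set.disjoint_left.2 fun z hzr hzs => Set.disjoint_left.1
    (hdisj _ hr _ hs (WithLp.ofLp_injective 1 |>.ne hne)) (mem_interior hzr) (mem_interior hzs)

end L1

theorem tiling_boundary_point_lemma_general
    (k : ℕ) (P : Set (Fin k → ℝ))
    (hcover : P + {x : Fin k → ℝ | (∑ i, |x i|) ≤ 1} = Set.univ)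
    (hdisj : ∀ r ∈ P, ∀ s ∈ P, r ≠ s →
      Disjoint {x : Fin k → ℝ | x - r ∈ interior {x : Fin k → ℝ | (∑ i, |x i|) ≤ 1}}
        {x : Fin k → ℝ | x - s ∈ interior {x : Fin k → ℝ | (∑ i, |x i|) ≤ 1}})
    (h0 : (0 : Fin k → ℝ) ∈ P) :
    ∀ x : Fin k → ℝ, (∀ j, 0 < x j) → (∑ j, x j) = 1 →
      ∃ r ∈ P, r ≠ 0 ∧ (∀ j, x j ≤ r j) ∧ (∑ j, r j) = 2 := by
  intro x hx hsum
  have hdisj₁ := pairwise_disjoint_ball_of_L1 hdisj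
  have hx₁ : ‖WithLp.toLp 1 x‖ = 1 := by
    simpa [PiLp.norm_eq_of_L1, abs_of_pos (hx _)] using hsum
  obtain ⟨r, hrP, hr0, hxr⟩ :=
    exists_ne_zero_dist_le_one_of_norm_eq_one (exists_dist_le_one_of_L1 hcover) hdisj₁ hx₁
  have hr2 := two_le_norm_of_pairwise_disjoint_ball hdisj₁ h0 hrP hr0
  rw [← dist_zero_right, dist_eq_sum_abs_of_L1] at hr2
  rw [dist_eq_sum_abs_of_L1] at hxr
  refine ⟨r.ofLp, hrP, fun h => hr0 (WithLp.ofLp_injective 1 h), ?_⟩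
  exact le_and_sum_eq_two_of_sum_abs hx hsum (by simpa using hr2) hxr

/-- If `P + 𝔓 = ℝ^k` with the open translates `r + 𝔓°` (`r ∈ P`) pairwise disjoint and
`0 ∈ P`, then for every `x ∈ ℝ_{>0}^k` with `∑ x_j = 1` there is `r ∈ P \ {0}` with
`r_j ≥ x_j` for all `j` and `∑ r_j = 2`. -/
theorem tiling_boundary_point_lemma
    (k : ℕ) (hk : 2 ≤ k) (P : Set (Fin k → ℝ))
    (hcover : P + {x : Fin k → ℝ | (∑ i, |x i|) ≤ 1} = Set.univ)
    (hdisj : ∀ r ∈ P, ∀ s ∈ P, r ≠ s →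
      Disjoint {x : Fin k → ℝ | x - r ∈ interior {x : Fin k → ℝ | (∑ i, |x i|) ≤ 1}}
        {x : Fin k → ℝ | x - s ∈ interior {x : Fin k → ℝ | (∑ i, |x i|) ≤ 1}})
    (h0 : (0 : Fin k → ℝ) ∈ P) :
    ∀ x : Fin k → ℝ, (∀ j, 0 < x j) → (∑ j, x j) = 1 →
      ∃ r ∈ P, r ≠ 0 ∧ (∀ j, x j ≤ r j) ∧ (∑ j, r j) = 2 :=
  tiling_boundary_point_lemma_general k P hcover hdisj h0
end

section
/- If $\rho(\mathfrak{P},L) = R$ for a full-rank lattice $L\subset\mathbb{R}^k$ and $R > 0$, then there exist $\boldsymbol{\zeta}\in\mathbb{R}^k$ and a nonempty set $E \subset \{\pm 1\}^k$ such that: (i) $L \cap (\boldsymbol{\zeta}+R\mathfrak{P}^\circ) = \emptyset$; (ii) $L \cap (\boldsymbol{\zeta}+R\mathfrak{P}_{\boldsymbol{\epsilon}}) \neq \emptyset$ for each $\boldsymbol{\epsilon}\in E$; (iii) no $\boldsymbol{\alpha}\in\mathbb{R}^k$ satisfies $\boldsymbol{\epsilon}\cdot\boldsymbol{\alpha} <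 0$ for all $\boldsymbol{\epsilon}\in E$. -/
/-!
The ℓ¹-distance `x ↦ d(x, L)` to the lattice is continuous and `L`-periodic, so it attains its
maximum on the closure of a fundamental domain, at a deep hole `ζ`; that maximum is the covering
radius `R`. Take for `E` the sign vectors of the faces of `ζ + R𝔓` that meet `L`. A lattice point
`v` with `‖v - ζ‖₁ = R` lies on the face of the sign vector `ε` of `v - ζ`, and
`‖v - ζ - tα‖₁ ≥ ε ⬝ (v - ζ - tα) = R - t ε ⬝ α`. So if `ε ⬝ α < 0` for all `ε ∈ E`, moving `ζ` a
little in direction `α` pushes it strictly farther than `R` from these finitely many points, while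
the other lattice points stay farther than `R` by discreteness: then `d(ζ + tα, L) > R`.
-/

open Metric Filter Topology Submodule

theorem AddSubgroup.infDist_add_of_mem {M : Type*} [SeminormedAddCommGroup M] {S : AddSubgroup M}
    (x : M) {w : M} (hw : w ∈ S) : infDist (x + w) (S : Set M) = infDist x S := by
  rw [← QuotientAddGroup.norm_mk, ← QuotientAddGroup.norm_mk, QuotientAddGroup.mk_add_of_mem x hw]

theorem IsClosed.infDist_le_iff {X : Type*} [PseudoMetricSpace X] [ProperSpace X] {L : Set X}
    (hL : IsClosed L) (hne : L.Nonempty) {x : X} {r : ℝ} :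
    infDist x L ≤ r ↔ ∃ v ∈ L, dist x v ≤ r := by
  refine ⟨fun h => ?_, fun ⟨v, hv, hvr⟩ => (infDist_le_dist_of_mem hv).trans hvr⟩
  obtain ⟨v, hv, hxv⟩ := hL.exists_infDist_eq_dist hne x
  exact ⟨v, hv, hxv ▸ h⟩

theorem eq_of_sInf_pos_upperBounds_eq {Y : Type*} {f : Y → ℝ} {ζ : Y} (hζ : ∀ y, f y ≤ f ζ)
    {R : ℝ} (hR : 0 < R) (h : sInf {r | 0 < r ∧ ∀ y, f y ≤ r} = R) : f ζ = R := by
  set S := {r | 0 < r ∧ ∀ y, f y ≤ r}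
  have hne : S.Nonempty := by
    by_contra hS
    rw [Set.not_nonempty_iff_eq_empty.mp hS, Real.sInf_empty] at h
    exact hR.ne h
  refine le_antisymm (h ▸ le_csInf hne fun r hr => hr.2 ζ) (not_lt.mp fun hlt => ?_)
  have hmid : (max (f ζ) 0 + R) / 2 ∈ S :=
    ⟨by positivity, fun y => by linarith [hζ y, le_max_left (f ζ) 0]⟩
  have hle := csInf_le (⟨0, fun r hr => hr.1.le⟩ : BddBelow S) hmid
  rw [h] at hle
  linarith [max_lt hlt hR]

theorem eventually_forall_lt_dist {X α : Type*} [PseudoMetricSpace X] {L : Set X} {ζ : X}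
    {R ρ : ℝ} (hRρ : R < ρ) (hfin : (L ∩ closedBall ζ ρ).Finite) (hfar : ∀ v ∈ L, R ≤ dist v ζ)
    {l : Filter α} {γ : α → X} (hγ : Tendsto γ l (𝓝 ζ))
    (hsphere : ∀ v ∈ L, dist v ζ = R → ∀ᶠ a in l, R < dist v (γ a)) :
    ∀ᶠ a in l, ∀ v ∈ L, R < dist v (γ a) := by
  have hnear : ∀ᶠ a in l, ∀ v ∈ L ∩ closedBall ζ ρ, R < dist v (γ a) := by
    refine hfin.eventually_all.mpr fun v hv => ?_
    rcases (hfar v hv.1).eq_or_lt with hvR | hvR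
    · exact hsphere v hv.1 hvR.symm
    · exact (tendsto_const_nhds.dist hγ).eventually (lt_mem_nhds hvR)
  have hclose : ∀ᶠ a in l, dist (γ a) ζ < ρ - R := hγ (ball_mem_nhds ζ (sub_pos.mpr hRρ))
  filter_upwards [hnear, hclose] with a hnear hclose v hv
  by_cases hvρ : dist v ζ ≤ ρ
  · exact hnear v ⟨hv, hvρ⟩
  · linarith [dist_triangle v (γ a) ζ]

theorem exists_dist_eq_frequently_dist_le {X α : Type*} [PseudoMetricSpace X] {L : Set X}
    {ζ : X} {R ρ : ℝ} (hRρ : R < ρ) (hfin : (L ∩ closedBall ζ ρ).Finite)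
    (hfar : ∀ v ∈ L, R ≤ dist v ζ) {l : Filter α} [l.NeBot] {γ : α → X} (hγ : Tendsto γ l (𝓝 ζ))
    (hcov : ∀ᶠ a in l, ∃ v ∈ L, dist v (γ a) ≤ R) :
    ∃ v ∈ L, dist v ζ = R ∧ ∃ᶠ a in l, dist v (γ a) ≤ R := by
  by_contra! hsphere
  obtain ⟨a, hlt, v, hv, hva⟩ :=
    ((eventually_forall_lt_dist hRρ hfin hfar hγ hsphere).and hcov).exists
  exact (hlt v hv).not_ge hva

namespace ZSpan

variable {E ι : Type*} [NormedAddCommGroup E] [NormedSpace ℝ E] [Fintype ι] (b : Module.Basis ι ℝ E)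

theorem isClosed : IsClosed (span ℤ (Set.range b) : Set E) :=
  AddSubgroup.isClosed_of_discrete (H := (span ℤ (Set.range b)).toAddSubgroup)

theorem exists_forall_infDist_le [ProperSpace E] :
    ∃ ζ : E, ∀ x, infDist x (span ℤ (Set.range b) : Set E) ≤
      infDist ζ (span ℤ (Set.range b) : Set E) := by
  have hK : IsCompact (closure (fundamentalDomain b)) :=
    (fundamentalDomain_isBounded b).isCompact_closure
  obtain ⟨ζ, -, hζ⟩ := hK.exists_isMaxOn ⟨_, subset_closure (fract_mem_fundamentalDomain b 0)⟩
    (continuous_infDist_pt _).continuousOn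
  refine ⟨ζ, fun x => ?_⟩
  have hfract : infDist x (span ℤ (Set.range b) : Set E) =
      infDist (fract b x) (span ℤ (Set.range b) : Set E) := by
    rw [fract_apply, sub_eq_add_neg, ← coe_toAddSubgroup,
      AddSubgroup.infDist_add_of_mem _ (neg_mem (floor b x).2)]
  exact hfract ▸ hζ (subset_closure (fract_mem_fundamentalDomain b x))

end ZSpan

theorem image_toLp_span_eq_span_map {V ι : Type*} [NormedAddCommGroup V] [NormedSpace ℝ V]
    (p : ENNReal) (b : Module.Basis ι ℝ V) :
    WithLp.toLp p '' (span ℤ (Set.range b) : Set V) =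
      span ℤ (Set.range (b.map (WithLp.linearEquiv p ℝ V).symm)) := by
  rw [← ZSpan.map, Submodule.map_coe]; rfl

section L1

variable {ι : Type*}

noncomputable def signVec (w : ι → ℝ) : ι → ℝ := fun j => if 0 ≤ w j then 1 else -1

theorem signVec_eq_one_or_neg_one (w : ι → ℝ) (j : ι) : signVec w j = 1 ∨ signVec w j = -1 := by
  unfold signVec; split_ifs <;> simp

variable [Fintype ι]

theorem sum_signVec_mul (w : ι → ℝ) : ∑ j, signVec w j * w j = ∑ j, |w j| :=
  Finset.sum_congr rfl fun j _ => by
    unfold signVec; split_ifs with h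
    · rw [one_mul, abs_of_nonneg h]
    · rw [neg_one_mul, abs_of_neg (not_le.mp h)]

theorem sum_mul_le_sum_abs {ε : ι → ℝ} (hε : ∀ j, |ε j| ≤ 1) (w : ι → ℝ) :
    ∑ j, ε j * w j ≤ ∑ j, |w j| :=
  Finset.sum_le_sum fun j _ => calc
    ε j * w j ≤ |ε j| * |w j| := abs_mul (ε j) (w j) ▸ le_abs_self _
    _ ≤ |w j| := mul_le_of_le_one_left (abs_nonneg _) (hε j)

-- `signVec w` is a subgradient of the ℓ¹-norm at `w`.
theorem sum_abs_sub_sub_mul_le (v ζ α : ι → ℝ) (t : ℝ) :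
    ∑ j, |v j - ζ j| - t * ∑ j, signVec (v - ζ) j * α j ≤ ∑ j, |v j - (ζ + t • α) j| :=
  calc ∑ j, |v j - ζ j| - t * ∑ j, signVec (v - ζ) j * α j
      = ∑ j, signVec (v - ζ) j * (v j - (ζ + t • α) j) := by
        rw [← show ∑ j, signVec (v - ζ) j * (v j - ζ j) = ∑ j, |v j - ζ j| from
          sum_signVec_mul (v - ζ), Finset.mul_sum, ← Finset.sum_sub_distrib]
        refine Finset.sum_congr rfl fun j _ => ?_
        simp only [Pi.add_apply, Pi.smul_apply, smul_eq_mul]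
        ring
    _ ≤ ∑ j, |v j - (ζ + t • α) j| := sum_mul_le_sum_abs (fun j => by
        rcases signVec_eq_one_or_neg_one (v - ζ) j with h | h <;> simp [h]) _

theorem exists_l1_ball_add_iff {L : Set (ι → ℝ)} {r : ℝ} (hr : 0 < r) (x : ι → ℝ) :
    (∃ p : ι → ℝ, ∑ i, |p i| ≤ 1 ∧ ∃ v ∈ L, x = r • p + v) ↔ ∃ v ∈ L, ∑ i, |v i - x i| ≤ r := by
  constructor
  · rintro ⟨p, hp, v, hv, rfl⟩
    refine ⟨v, hv, ?_⟩
    calc ∑ i, |v i - (r • p + v) i| = r * ∑ i, |p i| := by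
          simp [abs_mul, abs_of_pos hr, Finset.mul_sum]
      _ ≤ r := mul_le_of_le_one_right hr.le hp
  · rintro ⟨v, hv, hxv⟩
    refine ⟨r⁻¹ • (x - v), ?_, v, hv, by rw [smul_inv_smul₀ hr.ne', sub_add_cancel]⟩
    calc ∑ i, |(r⁻¹ • (x - v)) i| = r⁻¹ * ∑ i, |v i - x i| := by
          simp [abs_mul, abs_of_pos hr, Finset.mul_sum, abs_sub_comm]
      _ ≤ 1 := by rwa [inv_mul_le_iff₀ hr, mul_one]

theorem dist_toLp_one (v w : ι → ℝ) :
    dist (WithLp.toLp 1 v) (WithLp.toLp 1 w) = ∑ j, |v j - w j| := by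
  simp [PiLp.dist_eq_of_L1, Real.dist_eq]

variable (b : Module.Basis ι ℝ (ι → ℝ))

local notation "Λ₁" => WithLp.toLp 1 '' (span ℤ (Set.range b) : Set (ι → ℝ))

theorem infDist_toLp_le_iff (x : ι → ℝ) {r : ℝ} :
    infDist (WithLp.toLp 1 x) Λ₁ ≤ r ↔ ∃ v ∈ span ℤ (Set.range b), ∑ j, |v j - x j| ≤ r := by
  have hclosed : IsClosed Λ₁ := image_toLp_span_eq_span_map 1 b ▸ ZSpan.isClosed _
  rw [hclosed.infDist_le_iff ⟨_, 0, zero_mem _, rfl⟩, Set.exists_mem_image]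
  simp only [dist_comm (WithLp.toLp 1 x), dist_toLp_one, SetLike.mem_coe]

theorem exists_forall_infDist_toLp_le :
    ∃ ζ : ι → ℝ, ∀ x, infDist (WithLp.toLp 1 x) Λ₁ ≤ infDist (WithLp.toLp 1 ζ) Λ₁ := by
  obtain ⟨ζ, hζ⟩ := image_toLp_span_eq_span_map 1 b ▸ ZSpan.exists_forall_infDist_le _
  exact ⟨ζ.ofLp, fun x => hζ _⟩

theorem exists_nearest_signVec_mul_nonneg {ζ : ι → ℝ} {R : ℝ}
    (hfar : ∀ v ∈ span ℤ (Set.range b), R ≤ ∑ j, |v j - ζ j|)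
    (hcov : ∀ x : ι → ℝ, ∃ v ∈ span ℤ (Set.range b), ∑ j, |v j - x j| ≤ R) (α : ι → ℝ) :
    ∃ v ∈ span ℤ (Set.range b), ∑ j, |v j - ζ j| = R ∧ 0 ≤ ∑ j, signVec (v - ζ) j * α j := by
  have hfin : (Λ₁ ∩ closedBall (WithLp.toLp 1 ζ) (R + 1)).Finite := by
    rw [Set.inter_comm, image_toLp_span_eq_span_map]
    exact ZSpan.setFinite_inter _ isBounded_closedBall
  have hγ : Tendsto (fun t : ℝ => WithLp.toLp 1 (ζ + t • α)) (𝓝[>] 0) (𝓝 (WithLp.toLp 1 ζ)) :=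
    ((by fun_prop : Continuous fun t : ℝ => WithLp.toLp 1 (ζ + t • α)).tendsto' 0 _
      (by simp)).mono_left nhdsWithin_le_nhds
  have hcov' : ∀ t : ℝ, ∃ w ∈ Λ₁, dist w (WithLp.toLp 1 (ζ + t • α)) ≤ R := fun t => by
    simpa only [Set.exists_mem_image, dist_toLp_one, SetLike.mem_coe] using hcov (ζ + t • α)
  obtain ⟨_, ⟨v, hv, rfl⟩, hvR, hfreq⟩ := exists_dist_eq_frequently_dist_le (lt_add_one R) hfin
    (Set.forall_mem_image.mpr fun v hv => dist_toLp_one v ζ ▸ hfar v hv) hγ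
    (Eventually.of_forall hcov')
  obtain ⟨t, hdist, ht⟩ := (hfreq.and_eventually self_mem_nhdsWithin).exists
  rw [dist_toLp_one] at hvR hdist
  refine ⟨v, hv, hvR, nonneg_of_mul_nonneg_right ?_ ht⟩
  linarith [sum_abs_sub_sub_mul_le v ζ α t]

end L1

/-- If the covering radius of the cross-polytope `𝔓` with respect to a full-rank lattice
`L ⊂ ℝ^k` equals `R > 0`, then there are `ζ ∈ ℝ^k` and a nonempty set `E` of sign vectors
`ε ∈ {±1}^k` such that (i) `L` misses the open set `ζ + R𝔓°`; (ii) `L` meets each face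
`ζ + R𝔓_ε`, `ε ∈ E`; (iii) no `α ∈ ℝ^k` satisfies `ε·α < 0` for all `ε ∈ E`. -/
theorem covering_radius_crosspolytope_criterion
    (k : ℕ) (B : Module.Basis (Fin k) ℝ (Fin k → ℝ)) (R : ℝ) (hR : 0 < R)
    (hρ : sInf {r : ℝ | 0 < r ∧ ∀ x : Fin k → ℝ, ∃ p : Fin k → ℝ,
        (∑ i, |p i|) ≤ 1 ∧ ∃ v ∈ Submodule.span ℤ (Set.range ⇑B), x = r • p + v} = R) :
    ∃ (ζ : Fin k → ℝ) (E : Set (Fin k → ℝ)),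
      E.Nonempty ∧ (∀ ε ∈ E, ∀ j, ε j = 1 ∨ ε j = -1) ∧
      (∀ v ∈ Submodule.span ℤ (Set.range ⇑B), ¬ (∑ j, |v j - ζ j|) < R) ∧
      (∀ ε ∈ E, ∃ v ∈ Submodule.span ℤ (Set.range ⇑B),
        (∑ j, |v j - ζ j|) ≤ R ∧ (∑ j, ε j * (v j - ζ j)) = R) ∧
      ¬ ∃ α : Fin k → ℝ, ∀ ε ∈ E, (∑ j, ε j * α j) < 0 := by
  obtain ⟨ζ, hζ⟩ := exists_forall_infDist_toLp_le B
  have hζR := eq_of_sInf_pos_upperBounds_eq hζ hR <| .trans (congrArg sInf <| Set.ext fun r =>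
    and_congr_right fun hr => forall_congr' fun x =>
      (infDist_toLp_le_iff B x).trans (exists_l1_ball_add_iff hr x).symm) hρ
  have hcov : ∀ x : Fin k → ℝ, ∃ v ∈ span ℤ (Set.range B), ∑ j, |v j - x j| ≤ R := fun x =>
    (infDist_toLp_le_iff B x).mp ((hζ x).trans hζR.le)
  have hfar : ∀ v ∈ span ℤ (Set.range B), R ≤ ∑ j, |v j - ζ j| := fun v hv =>
    hζR.symm.trans_le ((infDist_toLp_le_iff B ζ).mpr ⟨v, hv, le_rfl⟩)
  set E := {ε : Fin k → ℝ | (∀ j, ε j = 1 ∨ ε j = -1) ∧ ∃ v ∈ span ℤ (Set.range B),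
    ∑ j, |v j - ζ j| ≤ R ∧ ∑ j, ε j * (v j - ζ j) = R}
  have hsign : ∀ v ∈ span ℤ (Set.range B), ∑ j, |v j - ζ j| = R → signVec (v - ζ) ∈ E :=
    fun v hv hvR => ⟨signVec_eq_one_or_neg_one _, v, hv, hvR.le, (sum_signVec_mul _).trans hvR⟩
  refine ⟨ζ, E, ?_, fun ε hε => hε.1, fun v hv => (hfar v hv).not_gt, fun ε hε => hε.2, ?_⟩
  · obtain ⟨v, hv, hvR⟩ := hcov ζ
    exact ⟨_, hsign v hv (le_antisymm hvR (hfar v hv))⟩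
  · rintro ⟨α, hα⟩
    obtain ⟨v, hv, hvR, hnonneg⟩ := exists_nearest_signVec_mul_nonneg B hfar hcov α
    exact (hα _ (hsign v hv hvR)).not_ge hnonneg
end

section
/- For $(\alpha,\beta,\gamma) \in (0,1)^3$, the translated lattice $(0,\beta) + L'_{(\alpha,\beta,\gamma)}$ intersects the unit square $[0,1]^2$ exactly in the three points $(\alpha,0)$, $(0,\beta)$, $(1,\gamma)$ if and only if $\beta + \gamma > 1$. -/
lemma lattice_key (α β γ : ℝ) (hα0 : 0 < α) (hα1 : α < 1) (hβ0 : 0 < β) (hβ1 : β < 1)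
    (hγ0 : 0 < γ) (hγ1 : γ < 1) (hs : 1 < β + γ) (m n : ℤ)
    (hx0 : (0:ℝ) ≤ (m:ℝ)*α + n) (hx1 : (m:ℝ)*α + n ≤ 1)
    (hy0 : (0:ℝ) ≤ β - (m:ℝ)*β + n*(γ-β)) (hy1 : β - (m:ℝ)*β + n*(γ-β) ≤ 1) :
    (m = 0 ∧ n = 0) ∨ (m = 1 ∧ n = 0) ∨ (m = 0 ∧ n = 1) := by
  have hnc : n ≤ -1 ∨ n = 0 ∨ n = 1 ∨ 2 ≤ n := by omega
  rcases hnc with hn | hn | hn | hn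
  · -- n ≤ -1 : contradiction
    exfalso
    have hnr : (n:ℝ) ≤ -1 := by exact_mod_cast hn
    have hm1 : 1 ≤ m := by
      by_contra h
      push_neg at h
      have hm : (m:ℝ) ≤ 0 := by exact_mod_cast (by omega : m ≤ 0)
      nlinarith [mul_nonpos_of_nonpos_of_nonneg hm hα0.le]
    have hm1' : (1:ℝ) ≤ (m:ℝ) := by exact_mod_cast hm1
    have hmn : (-n:ℝ) < m := by nlinarith
    have hmn' : 1 ≤ m + n := by
      have : -n < m := by exact_mod_cast hmn
      omega
    have hmn'' : (1:ℝ) ≤ (m:ℝ) + n := by exact_mod_cast hmn'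
    nlinarith
  · -- n = 0
    subst hn
    push_cast at hx0 hx1 hy0 hy1
    have hm0 : 0 ≤ m := by
      by_contra h
      push_neg at h
      have hm : (m:ℝ) ≤ -1 := by exact_mod_cast (by omega : m ≤ -1)
      nlinarith [mul_le_mul_of_nonneg_right hm hα0.le]
    have hm1 : m ≤ 1 := by
      by_contra h
      push_neg at h
      have hm : (2:ℝ) ≤ (m:ℝ) := by exact_mod_cast h
      nlinarith [mul_le_mul_of_nonneg_right (show (1:ℝ) ≤ (m:ℝ) - 1 by linarith) hβ0.le]
    interval_cases m
    · exact Or.inl ⟨rfl, rfl⟩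
    · exact Or.inr (Or.inl ⟨rfl, rfl⟩)
  · -- n = 1
    subst hn
    push_cast at hx0 hx1 hy0 hy1
    have hm0 : m ≤ 0 := by
      by_contra h
      push_neg at h
      have hm : (1:ℝ) ≤ (m:ℝ) := by exact_mod_cast h
      nlinarith [mul_le_mul_of_nonneg_right hm hα0.le]
    have hm1 : 0 ≤ m := by
      by_contra h
      push_neg at h
      have hm : (m:ℝ) ≤ -1 := by exact_mod_cast (by omega : m ≤ -1)
      nlinarith [mul_le_mul_of_nonneg_right (show (1:ℝ) ≤ -(m:ℝ) by linarith) hβ0.le]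
    have : m = 0 := le_antisymm hm0 hm1
    subst this
    exact Or.inr (Or.inr ⟨rfl, rfl⟩)
  · -- n ≥ 2 : contradiction
    exfalso
    have hnr : (2:ℝ) ≤ (n:ℝ) := by exact_mod_cast hn
    rcases le_or_gt (m + n) 0 with h | h
    · have hmn : (m:ℝ) + n ≤ 0 := by exact_mod_cast h
      nlinarith
    · have h1 : 1 - n ≤ m := by omega
      have h1' : (1:ℝ) - n ≤ (m:ℝ) := by exact_mod_cast h1
      nlinarith [mul_le_mul_of_nonneg_right h1' hα0.le]


/-- For `(α,β,γ) ∈ (0,1)³`, the translated lattice `(0,β) + L'_{(α,β,γ)}`, where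
`L'_{(α,β,γ)} = ℤ(α,-β) + ℤ(1,γ-β)`, meets the closed unit square `[0,1]²` exactly in the
three points `(α,0)`, `(0,β)`, `(1,γ)` if and only if `β + γ > 1`. -/
theorem translated_lattice_meets_unit_square_iff
    (α β γ : ℝ) (hα : α ∈ Set.Ioo (0:ℝ) 1) (hβ : β ∈ Set.Ioo (0:ℝ) 1)
    (hγ : γ ∈ Set.Ioo (0:ℝ) 1) :
    ((fun q : ℝ × ℝ => ((0:ℝ), β) + q) ''
          {p : ℝ × ℝ | ∃ m n : ℤ, p = m • ((α, -β) : ℝ × ℝ) + n • ((1, γ - β) : ℝ × ℝ)})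
        ∩ Set.Icc (((0:ℝ), (0:ℝ)) : ℝ × ℝ) ((1:ℝ), (1:ℝ))
      = {((α, 0) : ℝ × ℝ), ((0, β) : ℝ × ℝ), ((1, γ) : ℝ × ℝ)}
    ↔ 1 < β + γ := by
  obtain ⟨hα0, hα1⟩ := hα
  obtain ⟨hβ0, hβ1⟩ := hβ
  obtain ⟨hγ0, hγ1⟩ := hγ
  have key : ∀ m n : ℤ, ((0:ℝ), β) + (m • ((α, -β) : ℝ × ℝ) + n • ((1, γ - β) : ℝ × ℝ))
      = (((m:ℝ)*α + n, β - (m:ℝ)*β + n*(γ-β)) : ℝ × ℝ) := by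
    intro m n
    simp only [Prod.smul_mk, zsmul_eq_mul, Prod.mk_add_mk, Prod.mk.injEq]
    constructor <;> ring
  constructor
  · -- forward
    intro h
    by_contra hc
    push_neg at hc
    have hmem : ((1-α, β+γ) : ℝ × ℝ) ∈
        ((fun q : ℝ × ℝ => ((0:ℝ), β) + q) ''
          {p : ℝ × ℝ | ∃ m n : ℤ, p = m • ((α, -β) : ℝ × ℝ) + n • ((1, γ - β) : ℝ × ℝ)})
        ∩ Set.Icc (((0:ℝ), (0:ℝ)) : ℝ × ℝ) ((1:ℝ), (1:ℝ)) := by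
      constructor
      · refine ⟨(-1 : ℤ) • ((α, -β) : ℝ × ℝ) + (1:ℤ) • ((1, γ - β) : ℝ × ℝ), ⟨-1, 1, rfl⟩, ?_⟩
        show ((0:ℝ), β) + _ = _
        rw [key (-1) 1]
        simp only [Prod.mk.injEq]
        constructor <;> push_cast <;> ring
      · rw [Set.mem_Icc, Prod.mk_le_mk, Prod.mk_le_mk]
        refine ⟨⟨?_, ?_⟩, ?_, ?_⟩ <;> linarith
    rw [h] at hmem
    simp only [Set.mem_insert_iff, Set.mem_singleton_iff, Prod.mk.injEq] at hmem
    rcases hmem with ⟨h1, h2⟩ | ⟨h1, h2⟩ | ⟨h1, h2⟩ <;> linarith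
  · -- backward
    intro hs
    ext p
    simp only [Set.mem_inter_iff, Set.mem_image, Set.mem_setOf_eq, Set.mem_Icc,
      Set.mem_insert_iff, Set.mem_singleton_iff]
    constructor
    · rintro ⟨⟨q, ⟨m, n, rfl⟩, rfl⟩, hle0, hle1⟩
      rw [key m n] at hle0 hle1 ⊢
      rw [Prod.mk_le_mk] at hle0 hle1
      obtain ⟨hx0, hy0⟩ := hle0
      obtain ⟨hx1, hy1⟩ := hle1
      rcases lattice_key α β γ hα0 hα1 hβ0 hβ1 hγ0 hγ1 hs m n hx0 hx1 hy0 hy1 with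
        ⟨rfl, rfl⟩ | ⟨rfl, rfl⟩ | ⟨rfl, rfl⟩
      · right; left
        norm_num
      · left
        norm_num
      · right; right
        norm_num
    · rintro (rfl | rfl | rfl)
      · refine ⟨⟨(1:ℤ) • ((α, -β) : ℝ × ℝ) + (0:ℤ) • ((1, γ - β) : ℝ × ℝ), ⟨1, 0, rfl⟩, ?_⟩, ?_, ?_⟩
        · show ((0:ℝ), β) + _ = _
          rw [key 1 0]; norm_num
        · rw [Prod.mk_le_mk]; exact ⟨hα0.le, le_refl 0⟩
        · rw [Prod.mk_le_mk]; exact ⟨hα1.le, by linarith⟩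
      · refine ⟨⟨(0:ℤ) • ((α, -β) : ℝ × ℝ) + (0:ℤ) • ((1, γ - β) : ℝ × ℝ), ⟨0, 0, rfl⟩, ?_⟩, ?_, ?_⟩
        · show ((0:ℝ), β) + _ = _
          rw [key 0 0]; norm_num
        · rw [Prod.mk_le_mk]; exact ⟨le_refl 0, hβ0.le⟩
        · rw [Prod.mk_le_mk]; exact ⟨by linarith, hβ1.le⟩
      · refine ⟨⟨(0:ℤ) • ((α, -β) : ℝ × ℝ) + (1:ℤ) • ((1, γ - β) : ℝ × ℝ), ⟨0, 1, rfl⟩, ?_⟩, ?_, ?_⟩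
        · show ((0:ℝ), β) + _ = _
          rw [key 0 1]; norm_num
        · rw [Prod.mk_le_mk]; exact ⟨by linarith, hγ0.le⟩
        · rw [Prod.mk_le_mk]; exact ⟨le_refl 1, hγ1.le⟩
end

section
/- For any $(\alpha,\beta,\gamma) \in (0,1)^3$ with $\beta+\gamma > 1$, every open square of side $r > 1$ with sides parallel to the axes contains a point of $L'_{(\alpha,\beta,\gamma)}$; i.e., $L'_{(\alpha,\beta,\gamma)} \cap (\boldsymbol{\zeta} + r(0,1)^2) \neq \emptyset$ for all $r > 1$ and $\boldsymbol{\zeta}\in\mathbb{R}^2$. Consequently $\rho([0,1]^2, \delta^{-1/2}L'_{(\alpha,\beta,\gamma)}) = \delta^{-1/2}$ where $\delta = (1-\alpha)\beta+\alpha\gamma$. -/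
/-!
Fix a window `(a, a + 1]` for the first coordinate. For each `m` exactly one point
`m(α, -β) + n(1, γ - β)` of `L'` has its first coordinate `x` there, and its height is
`(γ - β) x - mδ`. Consecutive heights drop by `β` or `γ`, hence by at most `1`, and they run
from `+∞` to `-∞`, so one of them lands in any window `(b, b + 1]`: the unit square tiles the plane
modulo `L'`. Conversely, inside the strip `0 < x < 1` no point of `L'` has height in `(-β, γ)`,
an interval longer than `1`, so `t[0,1]² + L'` misses a point whenever `t < 1`. Rescaling by
`δ^{-1/2}` turns these two facts into the value of the covering radius.
-/

open Set Filter

theorem exists_apply_mem_Ioc_of_tendsto {y : ℤ → ℝ} (hstep : ∀ s, y s ≤ y (s + 1) + 1)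
    (hbot : Tendsto y atTop atBot) (htop : Tendsto y atBot atTop) (b : ℝ) :
    ∃ s, y s ∈ Ioc b (b + 1) := by
  obtain ⟨s₀, hs₀⟩ := eventually_atBot.1 (htop.eventually_gt_atTop (b + 1))
  obtain ⟨s, hs, hmin⟩ := Int.exists_least_of_bdd
    ⟨s₀, fun s hs => le_of_not_gt fun h => (hs₀ s h.le).not_ge hs⟩
    (hbot.eventually_le_atBot (b + 1)).exists
  have hprev : b + 1 < y (s - 1) := lt_of_not_ge fun h => by linarith [hmin _ h]
  have hjump := hstep (s - 1)
  rw [sub_add_cancel] at hjump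
  exact ⟨s, by linarith, hs⟩

section Lattice

variable {α β γ : ℝ}

def latticePoint (α β γ : ℝ) (m n : ℤ) : ℝ × ℝ :=
  m • ((α, -β) : ℝ × ℝ) + n • ((1, γ - β) : ℝ × ℝ)

theorem latticePoint_fst (m n : ℤ) : (latticePoint α β γ m n).1 = m * α + n := by
  simp [latticePoint]

theorem latticePoint_snd (m n : ℤ) : (latticePoint α β γ m n).2 = -(m * β) + n * (γ - β) := by
  simp [latticePoint]

theorem latticePoint_snd_eq (m n : ℤ) :
    (latticePoint α β γ m n).2
      = (γ - β) * (latticePoint α β γ m n).1 - m * ((1 - α) * β + α * γ) := by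
  rw [latticePoint_fst, latticePoint_snd]
  ring

theorem one_sub_mul_add_mul_pos (hα : α ∈ Icc (0 : ℝ) 1) (hβ : 0 < β) (hγ : 0 < γ) :
    0 < (1 - α) * β + α * γ := by
  obtain ⟨hα0, hα1⟩ := hα
  rcases le_total β γ with h | h <;> nlinarith

theorem latticePoint_snd_le_snd_succ_add_one (hα : α ∈ Icc (0 : ℝ) 1) (hβ : β ≤ 1) (hγ : γ ≤ 1)
    {m n n' : ℤ} (h : |(latticePoint α β γ m n).1 - (latticePoint α β γ (m + 1) n').1| < 1) :
    (latticePoint α β γ m n).2 ≤ (latticePoint α β γ (m + 1) n').2 + 1 := by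
  obtain ⟨hα0, hα1⟩ := hα
  rw [latticePoint_fst, latticePoint_fst, abs_sub_lt_iff] at h
  rw [latticePoint_snd, latticePoint_snd]
  push_cast at h ⊢
  have hlo : -1 < n - n' := Int.cast_lt.1 (by push_cast; linarith : ((-1 : ℤ) : ℝ) < _)
  have hhi : n - n' < 2 := Int.cast_lt.1 (by push_cast; linarith : _ < ((2 : ℤ) : ℝ))
  obtain rfl | rfl : n = n' ∨ n = n' + 1 := by omega
  all_goals push_cast; linarith

theorem exists_latticePoint_mem_Ioc_prod (hα : α ∈ Icc (0 : ℝ) 1) (hβ : β ∈ Ioc (0 : ℝ) 1)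
    (hγ : γ ∈ Ioc (0 : ℝ) 1) (a b : ℝ) :
    ∃ m n : ℤ, latticePoint α β γ m n ∈ Ioc a (a + 1) ×ˢ Ioc b (b + 1) := by
  obtain ⟨hβ0, hβ1⟩ := hβ
  obtain ⟨hγ0, hγ1⟩ := hγ
  set δ := (1 - α) * β + α * γ
  have hδ : 0 < δ := one_sub_mul_add_mul_pos hα hβ0 hγ0
  set p : ℤ → ℝ × ℝ := fun m => latticePoint α β γ m ⌊a + 1 - m * α⌋
  have hx : ∀ m, (p m).1 ∈ Ioc a (a + 1) := fun m => by
    simp only [p, latticePoint_fst]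
    constructor <;> linarith [Int.floor_le (a + 1 - m * α), Int.lt_floor_add_one (a + 1 - m * α)]
  have hstep : ∀ m, (p m).2 ≤ (p (m + 1)).2 + 1 := fun m => by
    obtain ⟨h₁, h₂⟩ := hx m
    obtain ⟨h₃, h₄⟩ := hx (m + 1)
    exact latticePoint_snd_le_snd_succ_add_one hα hβ1 hγ1
      (abs_sub_lt_iff.2 ⟨by linarith, by linarith⟩)
  have hslope : ∀ m, |(γ - β) * (p m).1| ≤ |a| + 1 := fun m => by
    rw [abs_mul]
    obtain ⟨h₁, h₂⟩ := hx m
    have hx' : |(p m).1| ≤ |a| + 1 :=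
      abs_le.2 ⟨by linarith [neg_abs_le a], by linarith [le_abs_self a]⟩
    have hγβ : |γ - β| ≤ 1 := abs_sub_le_iff.2 ⟨by linarith, by linarith⟩
    nlinarith [abs_nonneg (γ - β), abs_nonneg (p m).1]
  have hheight : (fun m => (p m).2) = fun m => (γ - β) * (p m).1 + -(m * δ) :=
    funext fun m => latticePoint_snd_eq _ _
  have hbot : Tendsto (fun m => (p m).2) atTop atBot := by
    rw [hheight]
    exact tendsto_atBot_add_left_of_ge _ _ (fun m => (abs_le.1 (hslope m)).2)
      (tendsto_neg_atTop_atBot.comp (tendsto_intCast_atTop_atTop.atTop_mul_const hδ))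
  have htop : Tendsto (fun m => (p m).2) atBot atTop := by
    rw [hheight]
    exact tendsto_atTop_add_left_of_le _ _ (fun m => (abs_le.1 (hslope m)).1)
      (tendsto_neg_atBot_atTop.comp
        ((tendsto_intCast_atBot_iff.2 tendsto_id).atBot_mul_const hδ))
  obtain ⟨m, hm⟩ := exists_apply_mem_Ioc_of_tendsto hstep hbot htop b
  exact ⟨m, _, hx m, hm⟩

theorem exists_mem_Icc_add_latticePoint (hα : α ∈ Icc (0 : ℝ) 1) (hβ : β ∈ Ioc (0 : ℝ) 1)
    (hγ : γ ∈ Ioc (0 : ℝ) 1) (x : ℝ × ℝ) :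
    ∃ q ∈ Icc ((0 : ℝ), (0 : ℝ)) (1, 1), ∃ m n : ℤ, x = q + latticePoint α β γ m n := by
  obtain ⟨m, n, ⟨h₁, h₂⟩, h₃, h₄⟩ :=
    exists_latticePoint_mem_Ioc_prod hα hβ hγ (x.1 - 1) (x.2 - 1)
  refine ⟨x - latticePoint α β γ m n, ⟨?_, ?_⟩, m, n, (sub_add_cancel _ _).symm⟩ <;>
    constructor <;> simp only [Prod.fst_sub, Prod.snd_sub] <;> linarith

theorem latticePoint_snd_notMem_Ioo (hα : α ∈ Icc (0 : ℝ) 1) (hβ : 0 ≤ β) (hγ : 0 ≤ γ)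
    {m n : ℤ} (hx : (latticePoint α β γ m n).1 ∈ Ioo 0 1) :
    (latticePoint α β γ m n).2 ∉ Ioo (-β) γ := by
  obtain ⟨hα0, hα1⟩ := hα
  rw [latticePoint_fst] at hx
  rw [latticePoint_snd]
  rintro ⟨hlo, hhi⟩
  -- In the basis `(α, -β)`, `(1 - α, γ)` of `L'` the point has coordinates `(m + n, n)`.
  have hx' : (0 : ℝ) < ((m + n : ℤ) : ℝ) * α + n * (1 - α) := by push_cast; linarith [hx.1]
  have hx'' : ((m + n : ℤ) : ℝ) * α + n * (1 - α) < 1 := by push_cast; linarith [hx.2]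
  have hy' : -β < -(((m + n : ℤ) : ℝ) * β) + n * γ := by push_cast; linarith
  have hy'' : -(((m + n : ℤ) : ℝ) * β) + n * γ < γ := by push_cast; linarith
  have hdich : ∀ k : ℤ, (k : ℝ) ≤ 0 ∨ 1 ≤ (k : ℝ) := fun k =>
    (le_or_gt k 0).imp Int.cast_nonpos.2 fun h => by exact_mod_cast h
  rcases hdich (m + n) with hM | hM <;> rcases hdich n with hn | hn <;> nlinarith

theorem smul_add_latticePoint_ne (hα : α ∈ Icc (0 : ℝ) 1) (hβ : 0 ≤ β) (hγ : 0 ≤ γ) {t : ℝ}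
    (ht₀ : 0 ≤ t) (ht₁ : t < 1) (htβγ : t < β + γ) {q : ℝ × ℝ}
    (hq : q ∈ Icc ((0 : ℝ), (0 : ℝ)) (1, 1)) (m n : ℤ) :
    t • q + latticePoint α β γ m n ≠ ((1 + t) / 2, (γ - β + t) / 2) := by
  intro h
  obtain ⟨⟨hq₁, hq₂⟩, hq₃, hq₄⟩ := hq
  have h₁ := congrArg Prod.fst h
  have h₂ := congrArg Prod.snd h
  simp only [Prod.fst_add, Prod.snd_add, Prod.smul_fst, Prod.smul_snd, smul_eq_mul]
    at h₁ h₂ hq₁ hq₂ hq₃ hq₄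
  refine latticePoint_snd_notMem_Ioo (m := m) (n := n) hα hβ hγ ⟨?_, ?_⟩ ⟨?_, ?_⟩ <;> nlinarith

end Lattice

/-- For `(α,β,γ) ∈ (0,1)³` with `β+γ > 1`, every open axis-parallel square of side `r > 1`
contains a point of `L'_{(α,β,γ)} = ℤ(α,-β) + ℤ(1,γ-β)`; consequently the covering radius of
the unit square `[0,1]²` with respect to the rescaled unimodular lattice
`δ^{-1/2} L'_{(α,β,γ)}` equals `δ^{-1/2}`, where `δ = (1-α)β + αγ`. -/
theorem lattice_meets_all_open_squares_and_covering_radius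
    (α β γ : ℝ) (hα : α ∈ Set.Ioo (0:ℝ) 1) (hβ : β ∈ Set.Ioo (0:ℝ) 1)
    (hγ : γ ∈ Set.Ioo (0:ℝ) 1) (hβγ : 1 < β + γ) :
    (∀ r : ℝ, 1 < r → ∀ ζ : ℝ × ℝ,
      ∃ p : ℝ × ℝ, (∃ m n : ℤ, p = m • ((α, -β) : ℝ × ℝ) + n • ((1, γ - β) : ℝ × ℝ)) ∧
        ζ.1 < p.1 ∧ p.1 < ζ.1 + r ∧ ζ.2 < p.2 ∧ p.2 < ζ.2 + r) ∧
    sInf {r : ℝ | 0 < r ∧ ∀ x : ℝ × ℝ,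
        ∃ q ∈ Set.Icc (((0:ℝ), (0:ℝ)) : ℝ × ℝ) ((1:ℝ), (1:ℝ)),
          ∃ p : ℝ × ℝ, (∃ m n : ℤ, p = m • ((α, -β) : ℝ × ℝ) + n • ((1, γ - β) : ℝ × ℝ)) ∧
            x = r • q + (Real.sqrt ((1 - α) * β + α * γ))⁻¹ • p}
      = (Real.sqrt ((1 - α) * β + α * γ))⁻¹ := by
  have hα' : α ∈ Icc (0 : ℝ) 1 := Ioo_subset_Icc_self hα
  have hβ' : β ∈ Ioc (0 : ℝ) 1 := Ioo_subset_Ioc_self hβ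
  have hγ' : γ ∈ Ioc (0 : ℝ) 1 := Ioo_subset_Ioc_self hγ
  refine ⟨fun r hr ζ => ?_, ?_⟩
  · obtain ⟨m, n, ⟨h₁, h₂⟩, h₃, h₄⟩ := exists_latticePoint_mem_Ioc_prod hα' hβ' hγ' ζ.1 ζ.2
    exact ⟨latticePoint α β γ m n, ⟨m, n, rfl⟩, h₁, by linarith, h₃, by linarith⟩
  set c := (Real.sqrt ((1 - α) * β + α * γ))⁻¹
  have hc : 0 < c := inv_pos.2 <| Real.sqrt_pos.2 <| one_sub_mul_add_mul_pos hα' hβ.1 hγ.1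
  refine IsLeast.csInf_eq ⟨⟨hc, fun x => ?_⟩, fun r ⟨hr, hcover⟩ => ?_⟩
  · obtain ⟨q, hq, m, n, hx⟩ := exists_mem_Icc_add_latticePoint hα' hβ' hγ' (c⁻¹ • x)
    refine ⟨q, hq, latticePoint α β γ m n, ⟨m, n, rfl⟩, ?_⟩
    rw [← smul_add, ← hx, smul_inv_smul₀ hc.ne']
  by_contra! hrc
  have ht : r / c < 1 := (div_lt_one hc).2 hrc
  obtain ⟨q, hq, _, ⟨m, n, rfl⟩, hx⟩ := hcover (c • ((1 + r / c) / 2, (γ - β + r / c) / 2))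
  refine smul_add_latticePoint_ne hα' hβ.1.le hγ.1.le (div_nonneg hr.le hc.le) ht
    (ht.trans hβγ) hq m n (smul_right_injective (ℝ × ℝ) hc.ne' ?_)
  show c • _ = c • _
  rw [smul_add, smul_smul, mul_div_cancel₀ _ hc.ne']
  exact hx.symm
end

section
/- For positive coprime integers $a_1 < \cdots < a_k < n$ and the weight choice $\boldsymbol{\ell} = (a_1,\ldots,a_k)$, the diameter of the weighted directed circulant graph satisfies $\operatorname{diam} C_n^+((a_1,\ldots,a_k), \mathbf{a}) = n + F(a_1,\ldots,a_k,n)$, where $F$ denotes the Frobenius number of $a_1,\ldots,a_k,n$. -/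
/-!
A path from `i` to `j` in `C_n⁺(a, a)` has length `N = ∑ x_h a_h`, an element of the numerical
semigroup `⟨a⟩` with `N ≡ j - i (mod n)`, so the diameter is the largest, over residues `c`, of the
least element of `⟨a⟩` in the class `c`. Every number above `F` lies in `⟨a, n⟩`, i.e. is an element
of `⟨a⟩` plus a multiple of `n`; applied to `F + 1, …, F + n` this bounds each least element by
`n + F`. In the class of `F` no element of `⟨a⟩` is `≤ F` (it would put `F` in `⟨a, n⟩`), so the
least one is `n + F`.
-/

namespace AddSubmonoid

theorem mem_closure_range_iff_exists_sum_mul {ι : Type*} [Fintype ι] (a : ι → ℕ)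
    {N : ℕ} : N ∈ closure (Set.range a) ↔ ∃ x : ι → ℕ, N = ∑ h, x h * a h := by
  simp only [mem_closure_range_iff_of_fintype, smul_eq_mul]

theorem mem_closure_union_singleton_iff {s : Set ℕ} {n N : ℕ} :
    N ∈ closure (s ∪ {n}) ↔ ∃ m ∈ closure s, ∃ t : ℕ, m + t * n = N := by
  simp only [closure_union, mem_sup, mem_closure_singleton, smul_eq_mul]
  constructor
  · rintro ⟨m, hm, _, ⟨t, rfl⟩, rfl⟩
    exact ⟨m, hm, t, rfl⟩
  · rintro ⟨m, hm, t, rfl⟩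
    exact ⟨m, hm, t * n, ⟨t, rfl⟩, rfl⟩

end AddSubmonoid

namespace FrobeniusNumber

variable {s : Set ℕ} {n F : ℕ}

theorem add_le_of_mem_closure_of_natCast_eq (hF : FrobeniusNumber F (s ∪ {n})) {m : ℕ}
    (hm : m ∈ AddSubmonoid.closure s) (hmF : (m : ZMod n) = F) : n + F ≤ m := by
  have hmod : m ≡ F [MOD n] := (ZMod.natCast_eq_natCast_iff _ _ _).mp hmF
  rcases le_or_gt m F with hmleF | hFm
  · obtain ⟨t, ht⟩ := (Nat.modEq_iff_dvd' hmleF).mp hmod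
    have hFmem : F ∈ AddSubmonoid.closure (s ∪ {n}) :=
      AddSubmonoid.mem_closure_union_singleton_iff.mpr ⟨m, hm, t, by rw [mul_comm, ← ht]; omega⟩
    exact absurd hFmem hF.1
  · have := Nat.le_of_dvd (by omega) ((Nat.modEq_iff_dvd' hFm.le).mp hmod.symm)
    omega

variable [NeZero n]

theorem exists_mem_closure_natCast_eq_le (hF : FrobeniusNumber F (s ∪ {n})) (c : ZMod n) :
    ∃ m ∈ AddSubmonoid.closure s, (m : ZMod n) = c ∧ m ≤ n + F := by
  -- `N` is the representative of `c` in `[F + 1, F + n]`.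
  set N := F + 1 + (c - (F + 1 : ZMod n)).val
  have hNc : (N : ZMod n) = c := by simp [N]
  have hNF : F < N := by omega
  obtain ⟨m, hm, t, hmN⟩ :=
    AddSubmonoid.mem_closure_union_singleton_iff.mp (not_not.mp fun h ↦ (hF.2 h).not_gt hNF)
  refine ⟨m, hm, ?_, ?_⟩
  · rw [← hNc, ← hmN]
    simp
  · have := ZMod.val_lt (c - (F + 1 : ZMod n))
    omega

theorem isGreatest_sInf_residue (hF : FrobeniusNumber F (s ∪ {n})) :
    IsGreatest (Set.range fun c : ZMod n ↦
      sInf {m : ℕ | (m : ZMod n) = c ∧ m ∈ AddSubmonoid.closure s}) (n + F) := by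
  have upper (c : ZMod n) :
      sInf {m : ℕ | (m : ZMod n) = c ∧ m ∈ AddSubmonoid.closure s} ≤ n + F := by
    obtain ⟨m, hm, hmc, hmle⟩ := hF.exists_mem_closure_natCast_eq_le c
    refine (Nat.sInf_le ?_).trans hmle
    exact ⟨hmc, hm⟩
  refine ⟨⟨F, (upper F).antisymm ?_⟩, ?_⟩
  · obtain ⟨m, hm, hmF, -⟩ := hF.exists_mem_closure_natCast_eq_le F
    exact le_csInf ⟨m, show _ ∧ _ from ⟨hmF, hm⟩⟩ fun _ hm' ↦
      hF.add_le_of_mem_closure_of_natCast_eq hm'.2 hm'.1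
  · rintro _ ⟨c, rfl⟩
    exact upper c

end FrobeniusNumber

theorem diam_weighted_circulant_digraph_eq_frobenius_general
    (k n : ℕ) (hn : 0 < n) (a : Fin k → ℕ)
    (F : ℕ) (hF : FrobeniusNumber F (Set.range a ∪ {n})) :
    sSup {d : ℕ | ∃ i j : ZMod n,
        d = sInf {N : ℕ | (N : ZMod n) = j - i ∧
            ∃ x : Fin k → ℕ, N = ∑ h, x h * a h}}
      = n + F := by
  have : NeZero n := .of_pos hn
  have hdist : {d : ℕ | ∃ i j : ZMod n, d = sInf {N : ℕ | (N : ZMod n) = j - i ∧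
      ∃ x : Fin k → ℕ, N = ∑ h, x h * a h}} =
      Set.range fun c : ZMod n ↦
        sInf {m : ℕ | (m : ZMod n) = c ∧ m ∈ AddSubmonoid.closure (Set.range a)} := by
    simp only [AddSubmonoid.mem_closure_range_iff_exists_sum_mul]
    ext d
    constructor
    · rintro ⟨i, j, rfl⟩
      exact ⟨j - i, rfl⟩
    · rintro ⟨c, rfl⟩
      exact ⟨0, c, by rw [sub_zero]⟩
  rw [hdist]
  exact hF.isGreatest_sInf_residue.csSup_eq

/-- For positive coprime integers `a_1 < ⋯ < a_k < n` and weights `ℓ = (a_1,…,a_k)`, the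
diameter of the weighted directed circulant graph satisfies
`diam C_n⁺((a_1,…,a_k), a) = n + F(a_1,…,a_k,n)`, where `F` is the Frobenius number.
The distance from `i` to `j` is the least total length `N = ∑ x_h a_h` of a directed path,
i.e. the least `N` representable as a nonnegative combination of the `a_h` with
`N ≡ j - i (mod n)`; the diameter is the largest such distance. -/
theorem diam_weighted_circulant_digraph_eq_frobenius
    (k n : ℕ) (hn : 0 < n) (a : Fin k → ℕ)
    (hmono : StrictMono a) (hpos : ∀ h, 0 < a h) (hlt : ∀ h, a h < n)
    (hgcd : Nat.gcd (Finset.univ.gcd a) n = 1)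
    (F : ℕ) (hF : FrobeniusNumber F (Set.range a ∪ {n})) :
    sSup {d : ℕ | ∃ i j : ZMod n,
        d = sInf {N : ℕ | (N : ZMod n) = j - i ∧
            ∃ x : Fin k → ℕ, N = ∑ h, x h * a h}}
      = n + F :=
  diam_weighted_circulant_digraph_eq_frobenius_general k n hn a F hF
end
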